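/- arXiv:2507.20269 — 11 statements merged into one kernel-verified Lean document; each statement's English description precedes it below -/
import Mathlib

section
/- Let f : ℝ² → ℝ be a differentiable function with f(z,λ) ≥ 0 for all (z,λ) ∈ ℝ², and define F : ℝ⁴ → ℝ² by F(x,y,z,λ) = (x² − y + y²·f(z,λ), λ). Then F is a submersion at every point of F⁻¹((0,∞)×ℝ); that is, for every p = (x,y,z,λ) ∈ ℝ⁴ with x² − y + y²·f(z,λ) > 0, the (Fréchet) derivative of F at p is a surjective linear map ℝ⁴ → ℝ². -/
/-!
The second component of `DF(p)` is the projection onto `λ`, so it suffices to find a vector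
in `ker dλ` on which the first component does not vanish. Along `(2x, 2y f(z,λ) - 1, 0, 0)` the
value of `f` is frozen and the first component of `DF(p)` is `(2x)² + (2y f(z,λ) - 1)²`; this is
positive, because `x = 0` and `2y f(z,λ) = 1` would force `y > 0` and
`x² - y + y² f(z,λ) = -y/2 < 0`.
-/

open ContinuousLinearMap

lemma sq_add_sq_pos_of_pos {x y t : ℝ} (ht : 0 ≤ t) (h : 0 < x ^ 2 - y + y ^ 2 * t) :
    0 < (2 * x) ^ 2 + (2 * y * t - 1) ^ 2 := by
  nlinarith [sq_nonneg x, sq_nonneg (2 * y * t - 1), mul_nonneg (sq_nonneg y) ht, sq_nonneg (y * t)]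

theorem LinearMap.surjective_of_surjective_snd {𝕜 E : Type*} [Field 𝕜] [AddCommGroup E]
    [Module 𝕜 E] (L : E →ₗ[𝕜] 𝕜 × 𝕜) (hsnd : Function.Surjective fun u => (L u).2) {v : E}
    (hv₁ : (L v).1 ≠ 0) (hv₂ : (L v).2 = 0) : Function.Surjective L := by
  rintro ⟨a, b⟩
  obtain ⟨u, hu⟩ := hsnd b
  refine ⟨u + ((a - (L u).1) / (L v).1) • v, Prod.ext ?_ ?_⟩
  · simp only [map_add, map_smul, Prod.fst_add, Prod.smul_fst, smul_eq_mul]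
    field_simp
    ring
  · simpa [hv₂] using hu

lemma hasFDerivAt_sq_sub_add_sq_mul_prod {f : ℝ × ℝ → ℝ} {f' : ℝ × ℝ →L[ℝ] ℝ} {x y z l : ℝ}
    (hf : HasFDerivAt f f' (z, l)) :
    HasFDerivAt (fun q : ℝ × ℝ × ℝ × ℝ => (q.1 ^ 2 - q.2.1 + q.2.1 ^ 2 * f q.2.2, q.2.2.2))
      (((2 * x) • fst ℝ ℝ _ + (2 * y * f (z, l) - 1) • (fst ℝ ℝ _ ∘L snd ℝ ℝ _)
          + y ^ 2 • (f' ∘L snd ℝ ℝ _ ∘L snd ℝ ℝ _)).prod (snd ℝ ℝ _ ∘L snd ℝ ℝ _ ∘L snd ℝ ℝ _))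
      (x, y, z, l) := by
  have hy : HasFDerivAt (fun q : ℝ × ℝ × ℝ × ℝ => q.2.1) (fst ℝ ℝ _ ∘L snd ℝ ℝ _) (x, y, z, l) :=
    hasFDerivAt_fst.comp _ hasFDerivAt_snd
  have hzl : HasFDerivAt (fun q : ℝ × ℝ × ℝ × ℝ => q.2.2) (snd ℝ ℝ _ ∘L snd ℝ ℝ _) (x, y, z, l) :=
    hasFDerivAt_snd.comp _ hasFDerivAt_snd
  refine ((((hasFDerivAt_fst.pow 2).sub hy).add ((hy.pow 2).mul (hf.comp (x, y, z, l) hzl))).prodMk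
    (hasFDerivAt_snd.comp (x, y, z, l) hzl)).congr_fderiv ?_
  ext <;> simp
  ring

/-- For differentiable `f : ℝ² → ℝ` with `f ≥ 0`, the map
`F(x,y,z,λ) = (x² − y + y²·f(z,λ), λ)` is a submersion at every point of
`F⁻¹((0,∞)×ℝ)`, i.e. its Fréchet derivative is surjective there. -/
theorem stmt_0 (f : ℝ × ℝ → ℝ) (hf : Differentiable ℝ f)
    (hfpos : ∀ p : ℝ × ℝ, 0 ≤ f p)
    (F : ℝ × ℝ × ℝ × ℝ → ℝ × ℝ)
    (hF : ∀ x y z l : ℝ, F (x, y, z, l) = (x ^ 2 - y + y ^ 2 * f (z, l), l)) :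
    ∀ p : ℝ × ℝ × ℝ × ℝ, (F p).1 > 0 →
      Function.Surjective (fderiv ℝ F p) := by
  have hFeq : F = fun q => (q.1 ^ 2 - q.2.1 + q.2.1 ^ 2 * f q.2.2, q.2.2.2) := by
    funext ⟨x, y, z, l⟩
    exact hF x y z l
  rintro ⟨x, y, z, l⟩ hp
  rw [hF] at hp
  have hDF := hasFDerivAt_sq_sub_add_sq_mul_prod (x := x) (y := y) (hf (z, l)).hasFDerivAt
  rw [← hFeq] at hDF
  rw [hDF.fderiv]
  refine LinearMap.surjective_of_surjective_snd _ (fun b => ⟨(0, 0, 0, b), by simp⟩)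
    (v := (2 * x, 2 * y * f (z, l) - 1, 0, 0)) ?_ (by simp)
  simpa [← sq, Prod.mk_zero_zero] using (sq_add_sq_pos_of_pos (hfpos (z, l)) hp).ne'
end

section
/- Let f : ℝ² → ℝ be continuous with f ≥ 0 everywhere, define F : ℝ⁴ → ℝ² by F(x,y,z,λ) = (x² − y + y²·f(z,λ), λ), and for λ ∈ ℝ set K_λ := {(u,v,a) ∈ ℝ³ : u² + v² = 1} \ {(0,1,a) : f(a,λ) = 0}. Fix b > 0 and λ ∈ ℝ. Then for every (x,y,z,λ) ∈ F⁻¹(b,λ) one has (x,y) ≠ (0,0), and the point g(x,y,z) := (x/√(x²+y²), y/√(x²+y²), z) belongs to K_λ; i.e., g is a well-defined map from F⁻¹(b,λ) into K_λ. -/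
/-!
On the fiber, `x² - y + y² f(z, λ) = b > 0`, so `(x, y) = (0, 0)` is impossible and `g` is the
radial projection of a nonzero vector onto the unit circle. The only points of the circle removed
from `K_λ` are `(0, 1, z)` with `f(z, λ) = 0`; such a point comes from `x = 0` and `y > 0`, where
the fiber equation would read `-y = b`.
-/

lemma sq_add_sq_pos_of_ne_zero {x y : ℝ} (h : (x, y) ≠ (0, 0)) : 0 < x ^ 2 + y ^ 2 := by
  rcases eq_or_ne x 0 with rfl | hx
  · have hy : y ≠ 0 := fun hy => h (by rw [hy])
    positivity
  · positivity

lemma div_sqrt_sq_add_div_sqrt_sq {x y : ℝ} (h : 0 < x ^ 2 + y ^ 2) :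
    (x / √(x ^ 2 + y ^ 2)) ^ 2 + (y / √(x ^ 2 + y ^ 2)) ^ 2 = 1 := by
  rw [div_pow, div_pow, Real.sq_sqrt h.le, ← add_div, div_self h.ne']

lemma eq_zero_and_pos_of_div_sqrt_eq {x y : ℝ} (h : 0 < x ^ 2 + y ^ 2)
    (hx : x / √(x ^ 2 + y ^ 2) = 0) (hy : y / √(x ^ 2 + y ^ 2) = 1) : x = 0 ∧ 0 < y := by
  have hr : 0 < √(x ^ 2 + y ^ 2) := Real.sqrt_pos.mpr h
  refine ⟨(div_eq_zero_iff.mp hx).resolve_right hr.ne', ?_⟩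
  rwa [(div_eq_one_iff_eq hr.ne').mp hy]

theorem stmt_1_general (f : ℝ × ℝ → ℝ)
    (F : ℝ × ℝ × ℝ × ℝ → ℝ × ℝ)
    (hF : ∀ x y z l : ℝ, F (x, y, z, l) = (x ^ 2 - y + y ^ 2 * f (z, l), l))
    (b l : ℝ) (hb : 0 < b)
    (K : Set (ℝ × ℝ × ℝ))
    (hK : K = {p : ℝ × ℝ × ℝ | p.1 ^ 2 + p.2.1 ^ 2 = 1} \
      {p : ℝ × ℝ × ℝ | p.1 = 0 ∧ p.2.1 = 1 ∧ f (p.2.2, l) = 0}) :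
    ∀ x y z : ℝ, (x, y, z, l) ∈ F ⁻¹' {(b, l)} →
      (x, y) ≠ (0, 0) ∧
      (x / Real.sqrt (x ^ 2 + y ^ 2), y / Real.sqrt (x ^ 2 + y ^ 2), z) ∈ K := by
  intro x y z hmem
  have hfiber : x ^ 2 - y + y ^ 2 * f (z, l) = b := by
    simpa [hF] using hmem
  have hne : (x, y) ≠ (0, 0) := by
    rintro ⟨⟩
    norm_num at hfiber
    exact hb.ne hfiber
  have hpos := sq_add_sq_pos_of_ne_zero hne
  refine ⟨hne, ?_⟩
  rw [hK]
  refine ⟨div_sqrt_sq_add_div_sqrt_sq hpos, ?_⟩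
  rintro ⟨hx, hy, hfz⟩
  obtain ⟨rfl, hy_pos⟩ := eq_zero_and_pos_of_div_sqrt_eq hpos hx hy
  rw [hfz] at hfiber
  linarith

/-- For continuous `f ≥ 0` and `F(x,y,z,λ) = (x² − y + y²·f(z,λ), λ)`,
with `b > 0` fixed, every point of the fiber `F⁻¹(b,λ)` satisfies `(x,y) ≠ (0,0)`,
and `g(x,y,z) = (x/√(x²+y²), y/√(x²+y²), z)` lands in
`K_λ = {(u,v,a) : u² + v² = 1} \ {(0,1,a) : f(a,λ) = 0}`. -/
theorem stmt_1 (f : ℝ × ℝ → ℝ) (hf : Continuous f)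
    (hfpos : ∀ p : ℝ × ℝ, 0 ≤ f p)
    (F : ℝ × ℝ × ℝ × ℝ → ℝ × ℝ)
    (hF : ∀ x y z l : ℝ, F (x, y, z, l) = (x ^ 2 - y + y ^ 2 * f (z, l), l))
    (b l : ℝ) (hb : 0 < b)
    (K : Set (ℝ × ℝ × ℝ))
    (hK : K = {p : ℝ × ℝ × ℝ | p.1 ^ 2 + p.2.1 ^ 2 = 1} \
      {p : ℝ × ℝ × ℝ | p.1 = 0 ∧ p.2.1 = 1 ∧ f (p.2.2, l) = 0}) :
    ∀ x y z : ℝ, (x, y, z, l) ∈ F ⁻¹' {(b, l)} →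
      (x, y) ≠ (0, 0) ∧
      (x / Real.sqrt (x ^ 2 + y ^ 2), y / Real.sqrt (x ^ 2 + y ^ 2), z) ∈ K :=
  stmt_1_general f F hF b l hb K hK
end

section
/- Let f : ℝ² → ℝ be a smooth (C^∞) function with f ≥ 0 everywhere, define F : ℝ⁴ → ℝ² by F(x,y,z,λ) = (x² − y + y²·f(z,λ), λ), fix b > 0 and λ ∈ ℝ, and set K_λ := {(u,v,a) ∈ ℝ³ : u² + v² = 1} \ {(0,1,a) : f(a,λ) = 0}. Define g : F⁻¹(b,λ) → K_λ by g(x,y,z,λ) = (x/√(x²+y²), y/√(x²+y²), z) and h : K_λ → ℝ⁴ by h(u,v,a) = (u·α(u,v,a), v·α(u,v,a), a, λ), where α(u,v,a) = 2b / (√(v² + 4b(u² + v²f(a,λ))) − v). Then h maps K_λ into F⁻¹(b,λ), and g and h are mutually inverse bijections: h(g(p)) = p for all p ∈ F⁻¹(b,λ) and g(h(q)) = q for all q ∈ K_λ. -/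
private lemma Av_neg (u v c : ℝ) (hc : 0 ≤ c) (h1 : u ^ 2 + v ^ 2 = 1)
    (h2 : ¬(u = 0 ∧ v = 1 ∧ c = 0)) (h0 : u ^ 2 + v ^ 2 * c = 0) : v < 0 := by
  have hu2 : u ^ 2 = 0 :=
    le_antisymm (by nlinarith [mul_nonneg (sq_nonneg v) hc]) (sq_nonneg u)
  have hu : u = 0 := (pow_eq_zero_iff two_ne_zero).mp hu2
  have hv2 : v ^ 2 = 1 := by linear_combination h1 - hu2
  have hcz : c = 0 := by linear_combination h0 - hu2 - c * hv2
  have hvne : v ≠ 1 := fun hv => h2 ⟨hu, hv, hcz⟩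
  have hfac : (v - 1) * (v + 1) = 0 := by linear_combination hv2
  rcases mul_eq_zero.mp hfac with h' | h'
  · exact absurd (by linarith) hvne
  · linarith

private lemma sqrt_sub_pos' (b v A : ℝ) (hb : 0 < b) (hA : 0 ≤ A)
    (hv : A = 0 → v < 0) : 0 < Real.sqrt (v ^ 2 + 4 * b * A) - v := by
  have hnn : 0 ≤ v ^ 2 + 4 * b * A := by positivity
  have hs0 : 0 ≤ Real.sqrt (v ^ 2 + 4 * b * A) := Real.sqrt_nonneg _
  have hs2 : (Real.sqrt (v ^ 2 + 4 * b * A)) ^ 2 = v ^ 2 + 4 * b * A :=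
    Real.sq_sqrt hnn
  rcases lt_or_ge v 0 with hv0 | hv0
  · linarith
  · rcases eq_or_lt_of_le hA with h0 | h0
    · exact absurd (hv h0.symm) (not_lt.mpr hv0)
    · nlinarith [mul_nonneg hs0 hv0]

private lemma alpha_quadratic (b v A : ℝ) (hb : 0 < b) (hA : 0 ≤ A)
    (hd : 0 < Real.sqrt (v ^ 2 + 4 * b * A) - v) :
    A * (2 * b / (Real.sqrt (v ^ 2 + 4 * b * A) - v)) ^ 2
      - v * (2 * b / (Real.sqrt (v ^ 2 + 4 * b * A) - v)) = b := by
  have hnn : 0 ≤ v ^ 2 + 4 * b * A := by positivity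
  have hs2 : (Real.sqrt (v ^ 2 + 4 * b * A)) ^ 2 = v ^ 2 + 4 * b * A :=
    Real.sq_sqrt hnn
  set s := Real.sqrt (v ^ 2 + 4 * b * A) with hs
  have hdne : s - v ≠ 0 := ne_of_gt hd
  have key : A * (2 * b) ^ 2 - v * (2 * b) * (s - v) = b * (s - v) ^ 2 := by
    linear_combination (-b) * hs2
  field_simp
  linear_combination -hs2

/-- With `f` smooth, `f ≥ 0`, `F(x,y,z,λ) = (x² − y + y²f(z,λ), λ)`,
`b > 0`, `λ ∈ ℝ`, `K_λ` as before, the maps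
`g(x,y,z,λ) = (x/√(x²+y²), y/√(x²+y²), z)` and
`h(u,v,a) = (u·α(u,v,a), v·α(u,v,a), a, λ)` with
`α(u,v,a) = 2b / (√(v² + 4b(u² + v²f(a,λ))) − v)` are mutually inverse bijections
between the fiber `F⁻¹(b,λ)` and `K_λ`. -/
theorem stmt_4 (f : ℝ × ℝ → ℝ) (hf : ContDiff ℝ (⊤ : ℕ∞) f)
    (hfpos : ∀ p : ℝ × ℝ, 0 ≤ f p)
    (F : ℝ × ℝ × ℝ × ℝ → ℝ × ℝ)
    (hF : ∀ x y z l : ℝ, F (x, y, z, l) = (x ^ 2 - y + y ^ 2 * f (z, l), l))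
    (b l : ℝ) (hb : 0 < b)
    (K : Set (ℝ × ℝ × ℝ))
    (hK : K = {p : ℝ × ℝ × ℝ | p.1 ^ 2 + p.2.1 ^ 2 = 1} \
      {p : ℝ × ℝ × ℝ | p.1 = 0 ∧ p.2.1 = 1 ∧ f (p.2.2, l) = 0})
    (α : ℝ × ℝ × ℝ → ℝ)
    (hα : ∀ u v a : ℝ, α (u, v, a) =
      2 * b / (Real.sqrt (v ^ 2 + 4 * b * (u ^ 2 + v ^ 2 * f (a, l))) - v))
    (g : ℝ × ℝ × ℝ × ℝ → ℝ × ℝ × ℝ)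
    (hg : ∀ x y z m : ℝ, g (x, y, z, m) =
      (x / Real.sqrt (x ^ 2 + y ^ 2), y / Real.sqrt (x ^ 2 + y ^ 2), z))
    (h : ℝ × ℝ × ℝ → ℝ × ℝ × ℝ × ℝ)
    (hh : ∀ u v a : ℝ, h (u, v, a) = (u * α (u, v, a), v * α (u, v, a), a, l)) :
    (∀ q ∈ K, h q ∈ F ⁻¹' {(b, l)}) ∧
    (∀ p ∈ F ⁻¹' {(b, l)}, g p ∈ K) ∧
    (∀ p ∈ F ⁻¹' {(b, l)}, h (g p) = p) ∧
    (∀ q ∈ K, g (h q) = q) := by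
  subst hK
  refine ⟨?_, ?_, ?_, ?_⟩
  · -- h maps K into the fiber
    rintro ⟨u, v, a⟩ ⟨hq1, hq2⟩
    simp only [Set.mem_setOf_eq] at hq1 hq2
    have hc0 : 0 ≤ f (a, l) := hfpos _
    have hA : 0 ≤ u ^ 2 + v ^ 2 * f (a, l) := by positivity
    have hAv : u ^ 2 + v ^ 2 * f (a, l) = 0 → v < 0 :=
      Av_neg u v (f (a, l)) hc0 hq1 hq2
    have hdpos := sqrt_sub_pos' b v (u ^ 2 + v ^ 2 * f (a, l)) hb hA hAv
    have key := alpha_quadratic b v (u ^ 2 + v ^ 2 * f (a, l)) hb hA hdpos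
    simp only [Set.mem_preimage, Set.mem_singleton_iff]
    rw [hh, hF]
    simp only [Prod.mk.injEq]
    refine ⟨?_, trivial⟩
    rw [hα]
    linear_combination key
  · -- g maps the fiber into K
    rintro ⟨x, y, z, m⟩ hp
    simp only [Set.mem_preimage, Set.mem_singleton_iff, hF, Prod.mk.injEq] at hp
    obtain ⟨hp1, rfl⟩ := hp
    have hc0 : 0 ≤ f (z, m) := hfpos _
    have hxy : 0 < x ^ 2 + y ^ 2 := by
      by_contra hcon
      push_neg at hcon
      have hx : x = 0 := by
        have : x ^ 2 = 0 := le_antisymm (by nlinarith [sq_nonneg y]) (sq_nonneg x)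
        exact (pow_eq_zero_iff two_ne_zero).mp this
      have hy : y = 0 := by
        have : y ^ 2 = 0 := le_antisymm (by nlinarith [sq_nonneg x]) (sq_nonneg y)
        exact (pow_eq_zero_iff two_ne_zero).mp this
      rw [hx, hy] at hp1
      simp at hp1
      linarith
    have hr : 0 < Real.sqrt (x ^ 2 + y ^ 2) := Real.sqrt_pos.mpr hxy
    have hrne : Real.sqrt (x ^ 2 + y ^ 2) ≠ 0 := ne_of_gt hr
    have hr2 : Real.sqrt (x ^ 2 + y ^ 2) ^ 2 = x ^ 2 + y ^ 2 := Real.sq_sqrt hxy.le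
    rw [hg]
    refine ⟨?_, ?_⟩
    · simp only [Set.mem_setOf_eq]
      field_simp
      exact hr2.symm
    · rintro ⟨h1, h2, h3⟩
      have hx : x = 0 := by
        rcases div_eq_zero_iff.mp h1 with h' | h'
        · exact h'
        · exact absurd h' hrne
      have hy : y = Real.sqrt (x ^ 2 + y ^ 2) := by
        field_simp at h2
        exact h2
      rw [hx, h3] at hp1
      nlinarith
  · -- h ∘ g = id on the fiber
    rintro ⟨x, y, z, m⟩ hp
    simp only [Set.mem_preimage, Set.mem_singleton_iff, hF, Prod.mk.injEq] at hp
    obtain ⟨hp1, rfl⟩ := hp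
    have hc0 : 0 ≤ f (z, m) := hfpos _
    have hxy : 0 < x ^ 2 + y ^ 2 := by
      by_contra hcon
      push_neg at hcon
      have hx : x = 0 := by
        have : x ^ 2 = 0 := le_antisymm (by nlinarith [sq_nonneg y]) (sq_nonneg x)
        exact (pow_eq_zero_iff two_ne_zero).mp this
      have hy : y = 0 := by
        have : y ^ 2 = 0 := le_antisymm (by nlinarith [sq_nonneg x]) (sq_nonneg y)
        exact (pow_eq_zero_iff two_ne_zero).mp this
      rw [hx, hy] at hp1
      simp at hp1
      linarith
    set r := Real.sqrt (x ^ 2 + y ^ 2) with hrdef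
    have hr : 0 < r := Real.sqrt_pos.mpr hxy
    have hrne : r ≠ 0 := ne_of_gt hr
    have hr2 : r ^ 2 = x ^ 2 + y ^ 2 := Real.sq_sqrt hxy.le
    have hy2b : 0 < y + 2 * b := by
      nlinarith [mul_nonneg (sq_nonneg y) hc0, sq_nonneg x]
    have hinner : (y / r) ^ 2 + 4 * b * ((x / r) ^ 2 + (y / r) ^ 2 * f (z, m))
        = ((y + 2 * b) / r) ^ 2 := by
      field_simp
      linear_combination 4 * b * hp1
    have hsq : Real.sqrt ((y / r) ^ 2 + 4 * b * ((x / r) ^ 2 + (y / r) ^ 2 * f (z, m)))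
        = (y + 2 * b) / r := by
      rw [hinner]
      exact Real.sqrt_sq (by positivity)
    have halpha : α (x / r, y / r, z) = r := by
      rw [hα, hsq]
      rw [show (y + 2 * b) / r - y / r = 2 * b / r by ring]
      rw [div_div_eq_mul_div, mul_comm (2 * b) r, mul_div_assoc, div_self (by positivity : (2:ℝ) * b ≠ 0), mul_one]
    rw [hg, hh, halpha]
    rw [div_mul_cancel₀ _ hrne, div_mul_cancel₀ _ hrne]
  · -- g ∘ h = id on K
    rintro ⟨u, v, a⟩ ⟨hq1, hq2⟩
    simp only [Set.mem_setOf_eq] at hq1 hq2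
    have hc0 : 0 ≤ f (a, l) := hfpos _
    have hA : 0 ≤ u ^ 2 + v ^ 2 * f (a, l) := by positivity
    have hAv : u ^ 2 + v ^ 2 * f (a, l) = 0 → v < 0 :=
      Av_neg u v (f (a, l)) hc0 hq1 hq2
    have hdpos := sqrt_sub_pos' b v (u ^ 2 + v ^ 2 * f (a, l)) hb hA hAv
    have hαpos : 0 < α (u, v, a) := by
      rw [hα]
      exact div_pos (by linarith) hdpos
    have hαne : α (u, v, a) ≠ 0 := ne_of_gt hαpos
    rw [hh, hg]
    have hnorm : Real.sqrt ((u * α (u, v, a)) ^ 2 + (v * α (u, v, a)) ^ 2)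
        = α (u, v, a) := by
      have he : (u * α (u, v, a)) ^ 2 + (v * α (u, v, a)) ^ 2 = α (u, v, a) ^ 2 := by
        linear_combination (α (u, v, a)) ^ 2 * hq1
      rw [he]
      exact Real.sqrt_sq hαpos.le
    rw [hnorm, mul_div_assoc, div_self hαne, mul_one, mul_div_assoc, div_self hαne, mul_one]
end

section
/- Define f : ℝ² → ℝ by f(z,λ) = (z² + λ²)(λz − 1)² and F : ℝ⁴ → ℝ² by F(x,y,z,λ) = (x² − y + y²·f(z,λ), λ). Then for every b > 0 and every λ ∈ ℝ, the fiber F⁻¹(b,λ) (as a topological subspace of ℝ⁴) is homeomorphic to the punctured cylinder {(u,v,a) ∈ ℝ³ : u² + v² = 1} \ {(0,1,0)}. In particular, all fibers of F over the open half-plane (0,∞)×ℝ are homeomorphic to one another. -/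
/-!
Fix `λ = l` and put `c(z) = f(z, l) ≥ 0`, which vanishes only at `z₀ = l⁻¹`. If `d ≥ 0` is the root
of `b d² + d = c(z)`, the slice of the fiber at height `z` is the conic `x² = P Q` with
`P = 1 - d y`, `Q = y + b (1 + d y)`, on which `P + Q > 0`. So `(2x, Q - P) / (P + Q)` lies on the unit
circle, and this projective change of coordinates has a rational inverse whose denominator vanishes
only at `v = 1, d = 0`. Hence every slice is a full circle, except the parabola at `z = z₀`, which
misses `(0, 1)`; the formulas depend continuously on `z`, and with `a = z - z₀` they identify the
fiber with the punctured cylinder.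
-/

open Set

/-- The nonnegative root of `b t² + t = c`, in rationalized form so that it is also right at
`b = 0`. -/
noncomputable def quadraticRoot (b c : ℝ) : ℝ := 2 * c / (1 + √(1 + 4 * b * c))

section quadraticRoot

variable {b c : ℝ}

theorem continuous_quadraticRoot (b : ℝ) : Continuous (quadraticRoot b) :=
  Continuous.div (by fun_prop) (by fun_prop) fun _ => by positivity

theorem quadraticRoot_nonneg (hc : 0 ≤ c) : 0 ≤ quadraticRoot b c := by
  unfold quadraticRoot
  positivity

theorem quadraticRoot_eq_zero_iff : quadraticRoot b c = 0 ↔ c = 0 := by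
  have : 1 + √(1 + 4 * b * c) ≠ 0 := by positivity
  simp [quadraticRoot, this]

theorem quadraticRoot_add_mul_sq (hb : 0 ≤ b) (hc : 0 ≤ c) :
    quadraticRoot b c + b * quadraticRoot b c ^ 2 = c := by
  have hs : √(1 + 4 * b * c) ^ 2 = 1 + 4 * b * c := Real.sq_sqrt (by positivity)
  have hpos : 1 + √(1 + 4 * b * c) ≠ 0 := by positivity
  unfold quadraticRoot
  generalize √(1 + 4 * b * c) = s at hs hpos ⊢
  field_simp
  linear_combination -c * hs

end quadraticRoot

section conic

variable {b d x y u v : ℝ}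

theorem conic_eq_iff_sq_eq_mul :
    x ^ 2 - y + y ^ 2 * (d + b * d ^ 2) = b ↔ x ^ 2 = (1 - d * y) * (y + b * (1 + d * y)) := by
  constructor <;> intro h <;> linear_combination h

theorem conic_factors_add_pos (hb : 0 ≤ b) (hd : 0 ≤ d)
    (h : x ^ 2 = (1 - d * y) * (y + b * (1 + d * y))) :
    0 < (1 - d * y) + (y + b * (1 + d * y)) := by
  rcases le_or_gt (1 - d * y) 0 with hP | hP
  · have hy : 0 < y := by nlinarith
    have hQ : 0 < y + b * (1 + d * y) := by nlinarith
    nlinarith [sq_nonneg x]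
  · nlinarith [sq_nonneg x]

theorem div_sq_add_div_sq_eq_one {P Q : ℝ} (h : x ^ 2 = P * Q) (hPQ : P + Q ≠ 0) :
    (2 * x / (P + Q)) ^ 2 + ((Q - P) / (P + Q)) ^ 2 = 1 := by
  field_simp
  linear_combination 4 * h

theorem cylinder_denom_pos (hb : 0 ≤ b) (hd : 0 ≤ d) (huv : u ^ 2 + v ^ 2 = 1)
    (hv : v = 1 → d ≠ 0) :
    0 < (1 + v) * d + (1 - v) * (1 + b * d) := by
  have hv1 : v ≤ 1 := by nlinarith [sq_nonneg u]
  have hv2 : -1 ≤ v := by nlinarith [sq_nonneg u]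
  rcases hv1.lt_or_eq with hv1 | rfl
  · nlinarith [mul_nonneg hb hd, mul_nonneg (by linarith : 0 ≤ 1 + v) hd]
  · have := (hv rfl).lt_of_le' hd
    linarith

theorem cylinder_denom_of_conic {P Q : ℝ} (hP : 1 - d * y = P) (hQ : y + b * (1 + d * y) = Q)
    (hs : P + Q ≠ 0) :
    (1 + (Q - P) / (P + Q)) * d + (1 - (Q - P) / (P + Q)) * (1 + b * d) =
      2 * (1 + 2 * b * d) / (P + Q) := by
  field_simp
  subst hP hQ
  ring

theorem conic_factors_of_cylinder {E : ℝ} (hE : (1 + v) * d + (1 - v) * (1 + b * d) = E)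
    (hE0 : E ≠ 0) (hy : (1 + v - b * (1 - v)) / E = y) :
    1 - d * y = (1 - v) * (1 + 2 * b * d) / E ∧
      y + b * (1 + d * y) = (1 + v) * (1 + 2 * b * d) / E := by
  subst hy
  constructor <;> field_simp <;> subst hE <;> ring

end conic

def conicFamily (b : ℝ) (c : ℝ → ℝ) : Set (ℝ × ℝ × ℝ) :=
  {p | p.1 ^ 2 - p.2.1 + p.2.1 ^ 2 * c p.2.2 = b}

def puncturedCylinder : Set (ℝ × ℝ × ℝ) :=
  {p | p.1 ^ 2 + p.2.1 ^ 2 = 1} \ {(0, 1, 0)}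

section cylinderChart

variable {b : ℝ} {D : ℝ → ℝ} {z₀ : ℝ}

variable (b D z₀) in
noncomputable def toCylinder (p : ℝ × ℝ × ℝ) : ℝ × ℝ × ℝ :=
  let P := 1 - D p.2.2 * p.2.1
  let Q := p.2.1 + b * (1 + D p.2.2 * p.2.1)
  (2 * p.1 / (P + Q), (Q - P) / (P + Q), p.2.2 - z₀)

-- On the line `d Q + (1 + b d) P = 1 + 2 b d` containing the conic, the point with
-- `(P : Q) = (1 - v : 1 + v)`.
variable (b D z₀) in
noncomputable def ofCylinder (q : ℝ × ℝ × ℝ) : ℝ × ℝ × ℝ :=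
  let d := D (z₀ + q.2.2)
  let E := (1 + q.2.1) * d + (1 - q.2.1) * (1 + b * d)
  (q.1 * (1 + 2 * b * d) / E, (1 + q.2.1 - b * (1 - q.2.1)) / E, z₀ + q.2.2)

theorem continuousOn_toCylinder (hb : 0 ≤ b) (hD : Continuous D) (hD0 : ∀ z, 0 ≤ D z) :
    ContinuousOn (toCylinder b D z₀) (conicFamily b fun z => D z + b * D z ^ 2) := by
  have : ∀ p ∈ conicFamily b (fun z => D z + b * D z ^ 2),
      (1 - D p.2.2 * p.2.1) + (p.2.1 + b * (1 + D p.2.2 * p.2.1)) ≠ 0 :=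
    fun p hp => (conic_factors_add_pos hb (hD0 _) (conic_eq_iff_sq_eq_mul.1 hp)).ne'
  unfold toCylinder
  dsimp only
  fun_prop (disch := assumption)

theorem cylinder_denom_pos_of_mem (hb : 0 ≤ b) (hD0 : ∀ z, 0 ≤ D z) (hz₀ : ∀ z, D z = 0 ↔ z = z₀)
    {q : ℝ × ℝ × ℝ} (hq : q ∈ puncturedCylinder) :
    0 < (1 + q.2.1) * D (z₀ + q.2.2) + (1 - q.2.1) * (1 + b * D (z₀ + q.2.2)) := by
  obtain ⟨u, v, a⟩ := q
  obtain ⟨huv, hne⟩ := hq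
  change u ^ 2 + v ^ 2 = 1 at huv
  refine cylinder_denom_pos hb (hD0 _) huv fun (hv : v = 1) hd => hne ?_
  have hu : u = 0 := by nlinarith
  have ha : a = 0 := by linarith [(hz₀ _).1 hd]
  rw [mem_singleton_iff, hu, hv, ha]

theorem continuousOn_ofCylinder (hb : 0 ≤ b) (hD : Continuous D) (hD0 : ∀ z, 0 ≤ D z)
    (hz₀ : ∀ z, D z = 0 ↔ z = z₀) : ContinuousOn (ofCylinder b D z₀) puncturedCylinder := by
  have : ∀ q ∈ puncturedCylinder,
      (1 + q.2.1) * D (z₀ + q.2.2) + (1 - q.2.1) * (1 + b * D (z₀ + q.2.2)) ≠ 0 :=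
    fun q hq => (cylinder_denom_pos_of_mem hb hD0 hz₀ hq).ne'
  unfold ofCylinder
  dsimp only
  fun_prop (disch := assumption)

theorem toCylinder_mem (hb : 0 ≤ b) (hD0 : ∀ z, 0 ≤ D z) (hz₀ : ∀ z, D z = 0 ↔ z = z₀)
    {p : ℝ × ℝ × ℝ} (hp : p ∈ conicFamily b fun z => D z + b * D z ^ 2) :
    toCylinder b D z₀ p ∈ puncturedCylinder := by
  obtain ⟨x, y, z⟩ := p
  have hx : x ^ 2 = (1 - D z * y) * (y + b * (1 + D z * y)) := conic_eq_iff_sq_eq_mul.1 hp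
  have hs := conic_factors_add_pos hb (hD0 z) hx
  refine ⟨div_sq_add_div_sq_eq_one hx hs.ne', fun h => ?_⟩
  simp only [toCylinder, mem_singleton_iff, Prod.mk.injEq] at h
  obtain ⟨-, hv, ha⟩ := h
  rw [div_eq_one_iff_eq hs.ne', (hz₀ z).2 (by linarith)] at hv
  linarith

theorem ofCylinder_mem (hb : 0 ≤ b) (hD0 : ∀ z, 0 ≤ D z) (hz₀ : ∀ z, D z = 0 ↔ z = z₀)
    {q : ℝ × ℝ × ℝ} (hq : q ∈ puncturedCylinder) :
    ofCylinder b D z₀ q ∈ conicFamily b fun z => D z + b * D z ^ 2 := by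
  have hE := cylinder_denom_pos_of_mem hb hD0 hz₀ hq
  obtain ⟨u, v, a⟩ := q
  have huv : u ^ 2 + v ^ 2 = 1 := hq.1
  simp only [conicFamily, ofCylinder, mem_ofPred_eq] at hE ⊢
  rw [conic_eq_iff_sq_eq_mul]
  generalize D (z₀ + a) = d at hE ⊢
  generalize hE' : (1 + v) * d + (1 - v) * (1 + b * d) = E at hE ⊢
  generalize hy : (1 + v - b * (1 - v)) / E = y
  obtain ⟨hP, hQ⟩ := conic_factors_of_cylinder hE' hE.ne' hy
  rw [hP, hQ]
  field_simp
  linear_combination (1 + 2 * b * d) ^ 2 * huv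

theorem ofCylinder_toCylinder (hb : 0 ≤ b) (hD0 : ∀ z, 0 ≤ D z)
    {p : ℝ × ℝ × ℝ} (hp : p ∈ conicFamily b fun z => D z + b * D z ^ 2) :
    ofCylinder b D z₀ (toCylinder b D z₀ p) = p := by
  obtain ⟨x, y, z⟩ := p
  have hs : 0 < 1 - D z * y + (y + b * (1 + D z * y)) :=
    conic_factors_add_pos hb (hD0 z) (conic_eq_iff_sq_eq_mul.1 hp)
  have hk : 0 < 1 + 2 * b * D z := by nlinarith [mul_nonneg hb (hD0 z)]
  simp only [toCylinder, ofCylinder, add_sub_cancel, Prod.mk.injEq]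
  generalize D z = d at hs hk
  generalize hP : 1 - d * y = P at hs ⊢
  generalize hQ : y + b * (1 + d * y) = Q at hs ⊢
  rw [cylinder_denom_of_conic hP hQ hs.ne']
  refine ⟨by field_simp, ?_, trivial⟩
  field_simp
  rw [div_eq_iff (by linarith)]
  subst hP hQ
  ring

theorem toCylinder_ofCylinder (hb : 0 ≤ b) (hD0 : ∀ z, 0 ≤ D z) (hz₀ : ∀ z, D z = 0 ↔ z = z₀)
    {q : ℝ × ℝ × ℝ} (hq : q ∈ puncturedCylinder) :
    toCylinder b D z₀ (ofCylinder b D z₀ q) = q := by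
  have hE := cylinder_denom_pos_of_mem hb hD0 hz₀ hq
  obtain ⟨u, v, a⟩ := q
  have hk : 0 < 1 + 2 * b * D (z₀ + a) := by nlinarith [mul_nonneg hb (hD0 (z₀ + a))]
  simp only [toCylinder, ofCylinder, add_sub_cancel_left, Prod.mk.injEq] at hE ⊢
  generalize D (z₀ + a) = d at hE hk
  generalize hE' : (1 + v) * d + (1 - v) * (1 + b * d) = E at hE ⊢
  generalize hy : (1 + v - b * (1 - v)) / E = y
  obtain ⟨hP, hQ⟩ := conic_factors_of_cylinder hE' hE.ne' hy
  rw [hP, hQ]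
  have := hk.ne'
  refine ⟨?_, ?_, trivial⟩ <;> field_simp <;> ring

end cylinderChart

section fiber

variable {α β γ δ ε : Type*} {F : α × β × γ × δ → ε × δ} {G : α × β × γ × δ → ε}

theorem mem_preimage_singleton_iff (hF : ∀ p, F p = (G p, p.2.2.2)) {b : ε} {l : δ}
    {p : α × β × γ × δ} : p ∈ F ⁻¹' {(b, l)} ↔ G p = b ∧ p.2.2.2 = l := by
  rw [mem_preimage, hF, mem_singleton_iff, Prod.mk.injEq]

variable [TopologicalSpace α] [TopologicalSpace β] [TopologicalSpace γ] [TopologicalSpace δ]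
  [TopologicalSpace ε]

def fiberHomeomorphSlice (hF : ∀ p, F p = (G p, p.2.2.2)) (b : ε) (l : δ) :
    F ⁻¹' {(b, l)} ≃ₜ {q : α × β × γ | G (q.1, q.2.1, q.2.2, l) = b} where
  toFun p := ⟨(p.1.1, p.1.2.1, p.1.2.2.1), by
    obtain ⟨h, hl⟩ := (mem_preimage_singleton_iff hF).1 p.2
    simpa [← hl] using h⟩
  invFun q := ⟨(q.1.1, q.1.2.1, q.1.2.2, l), (mem_preimage_singleton_iff hF).2 ⟨q.2, rfl⟩⟩
  left_inv p := by
    ext <;> simp [((mem_preimage_singleton_iff hF).1 p.2).2]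
  right_inv q := rfl
  continuous_toFun := by fun_prop
  continuous_invFun := by fun_prop

end fiber

-- `0⁻¹ = 0` makes this right also at `l = 0`.
theorem sq_add_sq_mul_sq_eq_zero_iff {z l : ℝ} :
    (z ^ 2 + l ^ 2) * (l * z - 1) ^ 2 = 0 ↔ z = l⁻¹ := by
  rcases eq_or_ne l 0 with rfl | hl
  · simp
  · have : 0 < z ^ 2 + l ^ 2 := by positivity
    rw [mul_eq_zero, or_iff_right this.ne', sq_eq_zero_iff, sub_eq_zero, mul_comm,
      mul_eq_one_iff_eq_inv₀ hl]

noncomputable def conicFamilyPartialHomeomorph {b : ℝ} {D : ℝ → ℝ} {z₀ : ℝ} (hb : 0 ≤ b)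
    (hD : Continuous D) (hD0 : ∀ z, 0 ≤ D z) (hz₀ : ∀ z, D z = 0 ↔ z = z₀) :
    PartialHomeomorph (ℝ × ℝ × ℝ) (ℝ × ℝ × ℝ) where
  toFun := toCylinder b D z₀
  invFun := ofCylinder b D z₀
  source := conicFamily b fun z => D z + b * D z ^ 2
  target := puncturedCylinder
  map_source' _ := toCylinder_mem hb hD0 hz₀
  map_target' _ := ofCylinder_mem hb hD0 hz₀
  left_inv' _ := ofCylinder_toCylinder hb hD0
  right_inv' _ := toCylinder_ofCylinder hb hD0 hz₀
  continuousOn_toFun := continuousOn_toCylinder hb hD hD0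
  continuousOn_invFun := continuousOn_ofCylinder hb hD hD0 hz₀

theorem nonempty_conicFamily_homeomorph_puncturedCylinder {b : ℝ} (hb : 0 ≤ b) {c : ℝ → ℝ}
    (hc : Continuous c) (hc0 : ∀ z, 0 ≤ c z) {z₀ : ℝ} (hz₀ : ∀ z, c z = 0 ↔ z = z₀) :
    Nonempty (conicFamily b c ≃ₜ puncturedCylinder) := by
  have hc_eq : (fun z => quadraticRoot b (c z) + b * quadraticRoot b (c z) ^ 2) = c :=
    funext fun z => quadraticRoot_add_mul_sq hb (hc0 z)
  rw [← hc_eq]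
  exact ⟨(conicFamilyPartialHomeomorph hb ((continuous_quadraticRoot b).comp hc)
    (fun z => quadraticRoot_nonneg (hc0 z))
    (fun z => quadraticRoot_eq_zero_iff.trans (hz₀ z))).toHomeomorphSourceTarget⟩

/-- For `f(z,λ) = (z² + λ²)(λz − 1)²` and
`F(x,y,z,λ) = (x² − y + y²f(z,λ), λ)`, every fiber `F⁻¹(b,λ)` with `b > 0` is
homeomorphic to the punctured cylinder `{(u,v,a) : u² + v² = 1} \ {(0,1,0)}`. -/
theorem stmt_5 (f : ℝ × ℝ → ℝ)
    (hf : ∀ z l : ℝ, f (z, l) = (z ^ 2 + l ^ 2) * (l * z - 1) ^ 2)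
    (F : ℝ × ℝ × ℝ × ℝ → ℝ × ℝ)
    (hF : ∀ x y z l : ℝ, F (x, y, z, l) = (x ^ 2 - y + y ^ 2 * f (z, l), l)) :
    ∀ b l : ℝ, 0 < b →
      Nonempty ((F ⁻¹' {(b, l)}) ≃ₜ
        ({p : ℝ × ℝ × ℝ | p.1 ^ 2 + p.2.1 ^ 2 = 1} \
          {((0 : ℝ), (1 : ℝ), (0 : ℝ))} : Set (ℝ × ℝ × ℝ))) := by
  intro b l hb
  have hc : (fun z => f (z, l)) = fun z => (z ^ 2 + l ^ 2) * (l * z - 1) ^ 2 :=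
    funext fun z => hf z l
  obtain ⟨e⟩ := nonempty_conicFamily_homeomorph_puncturedCylinder hb.le (c := fun z => f (z, l))
    (by rw [hc]; fun_prop) (fun z => by rw [hf]; positivity)
    (fun z => by rw [hf]; exact sq_add_sq_mul_sq_eq_zero_iff)
  exact ⟨(fiberHomeomorphSlice (fun _ => hF _ _ _ _) b l).trans e⟩
end

section
/- Define f : ℝ² → ℝ by f(z,λ) = (z² + λ²)(λz − 1)² and F : ℝ⁴ → ℝ² by F(x,y,z,λ) = (x² − y + y²·f(z,λ), λ). Then for every b > 0 and every λ ∈ ℝ, the fiber F⁻¹(b,λ) is a path-connected subset of ℝ⁴. -/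
/-!
Fix `λ` and write `g z = f (z, λ)`, so the fiber is `{x² - y + y² g(z) = b}` (times `{λ}`).
Here `g ≥ 0` and `g` vanishes at `z₀ = λ⁻¹`. Since `b ≥ 0`, every point `(x, y, z)` can be
joined to `(±√b, 0, z)` by shrinking `y` to `0` and solving for `x`, keeping its sign. When
`y = 0` the coordinate `z` can move freely. Over `z₀` the slice is the parabola `y = x² - b`,
and this joins `(-√b, 0, z₀)` to `(√b, 0, z₀)`.
-/

open Set

section LevelSet

variable {Z : Type*}

def quadraticLevelSet (g : Z → ℝ) (b : ℝ) : Set (ℝ × ℝ × Z) :=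
  {p | p.1 ^ 2 - p.2.1 + p.2.1 ^ 2 * g p.2.2 = b}

variable {g : Z → ℝ} {b : ℝ}

@[simp]
theorem mem_quadraticLevelSet {x y : ℝ} {z : Z} :
    (x, y, z) ∈ quadraticLevelSet g b ↔ x ^ 2 - y + y ^ 2 * g z = b :=
  Iff.rfl

variable [TopologicalSpace Z]

theorem joinedIn_quadraticLevelSet_of_sign {x y σ : ℝ} {z : Z} (hb : 0 ≤ b) (hgz : 0 ≤ g z)
    (hp : (x, y, z) ∈ quadraticLevelSet g b) (hσ : σ ^ 2 = 1) (hx : x = σ * |x|) :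
    JoinedIn (quadraticLevelSet g b) (x, y, z) (σ * √b, 0, z) := by
  rw [mem_quadraticLevelSet] at hp
  let r : ℝ → ℝ := fun t => b + (1 - t) * y - ((1 - t) * y) ^ 2 * g z
  -- `r t = (1 - t) b + t x² + t (1 - t) y² g z` on `[0, 1]`
  have hr : ∀ t ∈ Icc (0 : ℝ) 1, 0 ≤ r t := fun t ⟨ht₀, ht₁⟩ => by
    nlinarith [sq_nonneg x, mul_nonneg (mul_nonneg (mul_nonneg ht₀ (sub_nonneg.2 ht₁))
      (sq_nonneg y)) hgz]
  refine JoinedIn.ofLine (f := fun t => (σ * √(r t), (1 - t) * y, z))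
    (Continuous.continuousOn (by fun_prop)) ?_ (by simp [r]) ?_
  · have : r 0 = x ^ 2 := by simp only [r]; linarith
    simp only [this, Real.sqrt_sq_eq_abs, ← hx]
    simp
  · rintro _ ⟨t, ht, rfl⟩
    rw [mem_quadraticLevelSet, mul_pow, Real.sq_sqrt (hr t ht), hσ]
    ring

theorem joinedIn_quadraticLevelSet_of_sq_eq [PathConnectedSpace Z] {x : ℝ} (hx : x ^ 2 = b)
    (z z' : Z) : JoinedIn (quadraticLevelSet g b) (x, 0, z) (x, 0, z') := by
  have h : JoinedIn ({x} ×ˢ ({0} : Set ℝ) ×ˢ univ) (x, 0, z) (x, 0, z') :=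
    (JoinedIn.refl (mem_singleton x)).prod ((JoinedIn.refl (mem_singleton 0)).prod
      (joinedIn_univ.2 (PathConnectedSpace.joined z z')))
  refine h.mono ?_
  rintro ⟨_, _, _⟩ ⟨rfl, rfl, -⟩
  simp [hx]

theorem joinedIn_quadraticLevelSet_of_eq_zero {z₀ : Z} (hz₀ : g z₀ = 0) {x x' : ℝ}
    (hx : x ^ 2 = b) (hx' : x' ^ 2 = b) :
    JoinedIn (quadraticLevelSet g b) (x, 0, z₀) (x', 0, z₀) := by
  let u : ℝ → ℝ := fun t => x + t * (x' - x)
  refine JoinedIn.ofLine (f := fun t => (u t, u t ^ 2 - b, z₀))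
    (Continuous.continuousOn (by fun_prop)) (by simp [u, hx]) (by simp [u, hx']) ?_
  rintro _ ⟨t, -, rfl⟩
  simp [hz₀]

theorem isPathConnected_quadraticLevelSet [PathConnectedSpace Z] (hb : 0 ≤ b)
    (hg : ∀ z, 0 ≤ g z) {z₀ : Z} (hz₀ : g z₀ = 0) :
    IsPathConnected (quadraticLevelSet g b) := by
  have hsb : √b ^ 2 = b := Real.sq_sqrt hb
  refine ⟨(√b, 0, z₀), by simp [hsb], ?_⟩
  rintro ⟨x, y, z⟩ hp
  obtain ⟨σ, hσ, hx⟩ : ∃ σ : ℝ, σ ^ 2 = 1 ∧ x = σ * |x| := by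
    rcases le_total 0 x with h | h
    · exact ⟨1, by norm_num, by simp [abs_of_nonneg h]⟩
    · exact ⟨-1, by norm_num, by simp [abs_of_nonpos h]⟩
  have hσb : (σ * √b) ^ 2 = b := by rw [mul_pow, hσ, hsb, one_mul]
  exact ((joinedIn_quadraticLevelSet_of_sign hb (hg z) hp hσ hx).trans
    ((joinedIn_quadraticLevelSet_of_sq_eq hσb z z₀).trans
      (joinedIn_quadraticLevelSet_of_eq_zero hz₀ hσb hsb))).symm

end LevelSet

/-- For `l = 0` the junk value `0⁻¹ = 0` is a zero of the first factor. -/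
theorem sq_add_sq_mul_sq_inv_mul_sub_one (l : ℝ) :
    (l⁻¹ ^ 2 + l ^ 2) * (l * l⁻¹ - 1) ^ 2 = 0 := by
  rcases eq_or_ne l 0 with rfl | hl
  · simp
  · simp [hl]

/-- For `f(z,λ) = (z² + λ²)(λz − 1)²` and
`F(x,y,z,λ) = (x² − y + y²f(z,λ), λ)`, every fiber `F⁻¹(b,λ)` with `b > 0` is
path-connected. -/
theorem stmt_6 (f : ℝ × ℝ → ℝ)
    (hf : ∀ z l : ℝ, f (z, l) = (z ^ 2 + l ^ 2) * (l * z - 1) ^ 2)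
    (F : ℝ × ℝ × ℝ × ℝ → ℝ × ℝ)
    (hF : ∀ x y z l : ℝ, F (x, y, z, l) = (x ^ 2 - y + y ^ 2 * f (z, l), l)) :
    ∀ b l : ℝ, 0 < b → IsPathConnected (F ⁻¹' {(b, l)}) := by
  intro b l hb
  have hfiber : F ⁻¹' {(b, l)} =
      (fun p : ℝ × ℝ × ℝ => (p.1, p.2.1, p.2.2, l)) ''
        quadraticLevelSet (fun z => f (z, l)) b := by
    ext ⟨x, y, z, m⟩
    simp only [mem_preimage, hF, mem_singleton_iff, Prod.ext_iff, mem_image, Prod.exists]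
    grind [mem_quadraticLevelSet]
  rw [hfiber]
  refine (isPathConnected_quadraticLevelSet hb.le (fun z => ?_) (z₀ := l⁻¹) ?_).image
    (by fun_prop)
  · rw [hf]; positivity
  · rw [hf, sq_add_sq_mul_sq_inv_mul_sub_one]
end

section
/- Let K_0 := {(u,v,a) ∈ ℝ³ : u² + v² = 1} \ {(0,1,0)}. Then the loops γ, γ̃ : 𝕊¹ → K_0 given by γ(θ) = (cos θ, sin θ, 1) and γ̃(θ) = (cos θ, sin θ, −1) are NOT freely homotopic in K_0, i.e., they are not homotopic as continuous maps from the circle 𝕊¹ to K_0. -/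
/-!
The map `(u, v, a) ↦ eᵃ (u + i v) - i` sends `K₀` into `ℂ \ {0}`, turning `γ` into `w ↦ e w - i`,
which winds once around `0`, and `γ̃` into `w ↦ e⁻¹ w - i`, which does not. Winding number zero is
expressed as the existence of a continuous logarithm, which is carried along homotopies in
`ℂ \ {0}` by homotopy lifting for the covering `exp : ℂ → ℂ \ {0}`. The loop `e⁻¹ w - i` has a
logarithm, since it can be shrunk to the point `-i` inside `ℂ \ {0}`, while `e w - i` has none,
since the homotopy `e w - t i` leads to `e w`, for which `θ ↦ L (e^{iθ}) - iθ` would have to be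
constant by uniqueness of lifts, contradicting `2π`-periodicity.
-/

open unitInterval

section

variable {A : Type*} [TopologicalSpace A]

def HasContinuousLog (f : A → ℂ) : Prop :=
  ∃ L : A → ℂ, Continuous L ∧ ∀ a, Complex.exp (L a) = f a

theorem hasContinuousLog_const {c : ℂ} (hc : c ≠ 0) : HasContinuousLog fun _ : A ↦ c :=
  ⟨fun _ ↦ Complex.log c, continuous_const, fun _ ↦ Complex.exp_log hc⟩

theorem HasContinuousLog.of_homotopy {F : I × A → ℂ} (hF : Continuous F) (hF₀ : ∀ x, F x ≠ 0)
    (h₀ : HasContinuousLog fun a ↦ F (0, a)) : HasContinuousLog fun a ↦ F (1, a) := by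
  obtain ⟨L, hL, hLF⟩ := h₀
  let H : C(I × A, {z : ℂ // z ≠ 0}) := ⟨fun x ↦ ⟨F x, hF₀ x⟩, by fun_prop⟩
  let Λ := Complex.isCoveringMap_exp.liftHomotopy H ⟨L, hL⟩ fun a ↦ Subtype.ext (hLF a).symm
  refine ⟨fun a ↦ Λ (1, a), by fun_prop, fun a ↦ ?_⟩
  exact congr_arg Subtype.val
    (congr_fun (Complex.isCoveringMap_exp.liftHomotopy_lifts H _ _) (1, a))

end

theorem not_hasContinuousLog_const_mul_coe_circle (r : ℂ) :
    ¬ HasContinuousLog fun w : Circle ↦ r * w := by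
  rintro ⟨L, hL, hLw⟩
  have hlift : (fun θ : ℝ ↦ L (Circle.exp θ)) = fun θ : ℝ ↦ θ * Complex.I + L 1 := by
    refine Complex.isCoveringMap_exp.eq_of_comp_eq (by fun_prop) (by fun_prop) ?_ 0 (by simp)
    funext θ
    simp [Complex.exp_add, hLw, Circle.coe_exp, mul_comm]
  have h2π := congr_fun hlift (2 * Real.pi)
  simp at h2π

theorem norm_ofReal_mul_circle {r : ℝ} (hr : 0 ≤ r) (w : Circle) : ‖(r : ℂ) * w‖ = r := by
  rw [norm_mul, Circle.norm_coe, mul_one, Complex.norm_real, Real.norm_of_nonneg hr]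

theorem hasContinuousLog_mul_sub {r : ℝ} {c : ℂ} (hr : 0 ≤ r) (h : r < ‖c‖) :
    HasContinuousLog fun w : Circle ↦ r * w - c := by
  have hc : c ≠ 0 := norm_pos_iff.1 (hr.trans_lt h)
  let F : I × Circle → ℂ := fun x ↦ (x.1 * r : ℝ) * x.2 - c
  have hF₀ (x : I × Circle) : F x ≠ 0 := by
    refine sub_ne_zero.2 fun hx ↦ (h.trans_le' ?_).false
    rw [← hx, norm_ofReal_mul_circle (mul_nonneg x.1.2.1 hr)]
    exact mul_le_of_le_one_left hr x.1.2.2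
  simpa [F] using HasContinuousLog.of_homotopy (F := F) (by fun_prop) hF₀
    (by simpa [F] using hasContinuousLog_const (neg_ne_zero.2 hc))

theorem not_hasContinuousLog_mul_sub {r : ℝ} {c : ℂ} (h : ‖c‖ < r) :
    ¬ HasContinuousLog fun w : Circle ↦ r * w - c := by
  intro hlog
  have hr : 0 < r := (norm_nonneg c).trans_lt h
  let F : I × Circle → ℂ := fun x ↦ r * x.2 - (σ x.1 : ℝ) * c
  have hF₀ (x : I × Circle) : F x ≠ 0 := by
    refine sub_ne_zero.2 fun hx ↦ (h.trans_le ?_).false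
    rw [← norm_ofReal_mul_circle hr.le x.2, hx, norm_mul, Complex.norm_real,
      Real.norm_of_nonneg (σ x.1).2.1]
    exact mul_le_of_le_one_left (norm_nonneg c) (σ x.1).2.2
  exact not_hasContinuousLog_const_mul_coe_circle r <| by
    simpa [F] using
      HasContinuousLog.of_homotopy (F := F) (by fun_prop) hF₀ (by simpa [F] using hlog)

noncomputable def cylinderToPlane (p : ℝ × ℝ × ℝ) : ℂ :=
  Real.exp p.2.2 * (p.1 + p.2.1 * Complex.I)

theorem cylinderToPlane_circle (w : Circle) (a : ℝ) :
    cylinderToPlane ((w : ℂ).re, (w : ℂ).im, a) = Real.exp a * w := by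
  rw [cylinderToPlane, Complex.re_add_im]

theorem eq_of_cylinderToPlane_eq_I {p : ℝ × ℝ × ℝ} (hp : p.1 ^ 2 + p.2.1 ^ 2 = 1)
    (h : cylinderToPlane p = Complex.I) : p = (0, 1, 0) := by
  obtain ⟨u, v, a⟩ := p
  have ha : Real.exp a = 1 := by
    simpa [cylinderToPlane, Complex.norm_add_mul_I, hp, Complex.norm_real] using congr_arg norm h
  rw [Real.exp_eq_one_iff] at ha
  subst ha
  obtain ⟨rfl, rfl⟩ : u = 0 ∧ v = 1 := by simpa [cylinderToPlane, Complex.ext_iff] using h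
  rfl

/-- For `K_0 = {(u,v,a) : u² + v² = 1} \ {(0,1,0)}`, the loops
`γ(θ) = (cos θ, sin θ, 1)` and `γ̃(θ) = (cos θ, sin θ, −1)` are NOT freely homotopic
in `K_0`: there is no homotopy between them taking values in `K_0`. -/
theorem stmt_9 (K : Set (ℝ × ℝ × ℝ))
    (hK : K = {p : ℝ × ℝ × ℝ | p.1 ^ 2 + p.2.1 ^ 2 = 1} \ {((0 : ℝ), (1 : ℝ), (0 : ℝ))})
    (γ γ' : C(Circle, ℝ × ℝ × ℝ))
    (hγ : ∀ w : Circle, γ w = ((w : ℂ).re, (w : ℂ).im, 1))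
    (hγ' : ∀ w : Circle, γ' w = ((w : ℂ).re, (w : ℂ).im, -1)) :
    ¬ ∃ H : ContinuousMap.Homotopy γ γ', ∀ p : unitInterval × Circle, H p ∈ K := by
  rintro ⟨H, hH⟩
  subst hK
  let F : I × Circle → ℂ := fun x ↦ cylinderToPlane (H.symm x) - Complex.I
  have hF₀ (x : I × Circle) : F x ≠ 0 :=
    sub_ne_zero.2 fun h ↦ (hH _).2 (eq_of_cylinderToPlane_eq_I (hH _).1 h)
  have hF_zero : HasContinuousLog fun w ↦ F (0, w) := by
    simpa only [F, H.symm_apply, symm_zero, H.apply_one, hγ', cylinderToPlane_circle] using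
      hasContinuousLog_mul_sub (Real.exp_nonneg _) (by simp)
  refine not_hasContinuousLog_mul_sub (r := Real.exp 1) (c := Complex.I) (by simp) ?_
  simpa only [F, H.symm_apply, symm_one, H.apply_zero, hγ, cylinderToPlane_circle] using
    hF_zero.of_homotopy (by unfold F cylinderToPlane; fun_prop) hF₀
end

section
/- Define f : ℝ² → ℝ by f(z,λ) = (z² + λ²)(λz − 1)² and F : ℝ⁴ → ℝ² by F(x,y,z,λ) = (x² − y + y²·f(z,λ), λ). Then F is not locally topologically trivial at the point (1,0) ∈ ℝ²: there do not exist an open neighborhood D of (1,0) in ℝ² and a homeomorphism Φ : F⁻¹(D) → F⁻¹(1,0) × D such that the composition of Φ with the projection onto D equals the restriction of F to F⁻¹(D). In particular (1,0) is a bifurcation value of F, i.e., F is not locally C^∞ trivial at (1,0). -/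
set_option maxHeartbeats 1000000

private lemma aux_norm4 (x y z l c : ℝ) (hx : |x| ≤ c) (hy : |y| ≤ c) (hz : |z| ≤ c)
    (hl : |l| ≤ c) : ‖((x, y, z, l) : ℝ × ℝ × ℝ × ℝ)‖ ≤ c := by
  simp only [Prod.norm_def, Real.norm_eq_abs, sup_le_iff]
  exact ⟨hx, hy, hz, hl⟩

private lemma aux_normy (x y z l : ℝ) : |y| ≤ ‖((x, y, z, l) : ℝ × ℝ × ℝ × ℝ)‖ := by
  calc |y| = ‖(((y, z, l) : ℝ × ℝ × ℝ).1 : ℝ)‖ := (Real.norm_eq_abs y).symm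
  _ ≤ ‖((y, z, l) : ℝ × ℝ × ℝ)‖ := norm_fst_le _
  _ ≤ ‖((x, y, z, l) : ℝ × ℝ × ℝ × ℝ)‖ := norm_snd_le ((x, y, z, l) : ℝ × ℝ × ℝ × ℝ)

private lemma aux_gap (x y z l δ : ℝ) (hδ14 : δ ≤ 1/4)
    (heq : x ^ 2 - y + y ^ 2 * ((z ^ 2 + l ^ 2) * (l * z - 1) ^ 2) = 1)
    (hl0 : 0 ≤ l) (hlδ : l ≤ δ) (hz1 : 3/2 ≤ |z|) (hz2 : |z| ≤ 2) :
    ‖((x, y, z, l) : ℝ × ℝ × ℝ × ℝ)‖ ≤ 3 := by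
  have hlabs : |l| ≤ 1/4 := by rw [abs_of_nonneg hl0]; linarith
  have hlz : |l * z| ≤ 1/2 := by
    rw [abs_mul]
    calc |l| * |z| ≤ (1/4) * 2 := mul_le_mul hlabs hz2 (abs_nonneg z) (by norm_num)
    _ = 1/2 := by norm_num
  have hz2' : (9:ℝ)/4 ≤ z ^ 2 := by nlinarith [sq_abs z, abs_nonneg z]
  have hlz2 : (1:ℝ)/4 ≤ (l * z - 1) ^ 2 := by
    have h1 := (abs_le.mp hlz).2
    nlinarith
  have hff : (1:ℝ)/2 ≤ (z ^ 2 + l ^ 2) * (l * z - 1) ^ 2 := by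
    nlinarith [sq_nonneg l, sq_nonneg (l*z-1)]
  have hyf : y ^ 2 * ((z ^ 2 + l ^ 2) * (l * z - 1) ^ 2) ≤ 1 + y := by
    nlinarith [sq_nonneg x]
  have hy3 : |y| ≤ 3 := by
    rw [abs_le]
    constructor
    · nlinarith [mul_le_mul_of_nonneg_left hff (sq_nonneg y)]
    · nlinarith [mul_le_mul_of_nonneg_left hff (sq_nonneg y)]
  have hx2 : |x| ≤ 3 := by
    have hffnn : 0 ≤ y ^ 2 * ((z ^ 2 + l ^ 2) * (l * z - 1) ^ 2) := by positivity
    rw [abs_le]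
    constructor
    · nlinarith [abs_le.mp hy3]
    · nlinarith [abs_le.mp hy3]
  exact aux_norm4 x y z l 3 hx2 hy3 (by linarith) (by linarith [abs_le.mp hlabs])

private lemma aux_final (x y z δ N : ℝ) (hδpos : 0 < δ) (hδ14 : δ ≤ 1/4)
    (hNdef : N = 36 + 8 / δ ^ 2)
    (heq : x ^ 2 - y + y ^ 2 * ((z ^ 2 + δ ^ 2) * (δ * z - 1) ^ 2) = 1)
    (hzlt : |z| < 3/2) (hNlt : N < ‖((x, y, z, δ) : ℝ × ℝ × ℝ × ℝ)‖) : False := by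
  have hN36 : (36:ℝ) ≤ N := by
    have h8 : (0:ℝ) < 8 / δ ^ 2 := by positivity
    rw [hNdef]; linarith
  have hδsq : (0:ℝ) < δ ^ 2 := by positivity
  have hzN : |z| ≤ N := by linarith
  have hδN : |δ| ≤ N := by rw [abs_of_nonneg hδpos.le]; linarith
  have hffnn : (0:ℝ) ≤ (z ^ 2 + δ ^ 2) * (δ * z - 1) ^ 2 := by positivity
  have hxy : N < |x| ∨ N < |y| := by
    by_contra hcon
    push_neg at hcon
    exact absurd (aux_norm4 x y z δ N hcon.1 hcon.2 hzN hδN) (not_le.mpr hNlt)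
  have hy : N < y := by
    rcases hxy with h | h
    · have hNx : N * N < |x| * |x| := mul_self_lt_mul_self (by linarith) h
      nlinarith [sq_abs x, mul_nonneg (sq_nonneg y) hffnn, sq_nonneg (N - 1)]
    · rcases lt_abs.mp h with h' | h'
      · exact h'
      · exfalso
        nlinarith [sq_nonneg x, mul_nonneg (sq_nonneg y) hffnn]
  have hy1 : (1:ℝ) ≤ y := by linarith
  have hyf : y ^ 2 * ((z ^ 2 + δ ^ 2) * (δ * z - 1) ^ 2) ≤ 1 + y := by
    nlinarith [sq_nonneg x]
  have hδz : |δ * z| ≤ 3/8 := by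
    rw [abs_mul, abs_of_nonneg hδpos.le]
    calc δ * |z| ≤ (1/4) * (3/2) :=
      mul_le_mul hδ14 (le_of_lt hzlt) (abs_nonneg z) (by norm_num)
    _ = 3/8 := by norm_num
  have hδz2 : (1:ℝ)/4 ≤ (δ * z - 1) ^ 2 := by
    have h1 := (abs_le.mp hδz).2
    nlinarith
  have hff : δ ^ 2 * (1/4) ≤ (z ^ 2 + δ ^ 2) * (δ * z - 1) ^ 2 := by
    nlinarith [sq_nonneg z, sq_nonneg δ,
      mul_le_mul_of_nonneg_left hδz2 (by positivity : (0:ℝ) ≤ z ^ 2 + δ ^ 2)]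
  have hB : δ ^ 2 * y ^ 2 ≤ 8 * y := by
    nlinarith [mul_le_mul_of_nonneg_left hff (sq_nonneg y), hy1]
  have h2 : δ ^ 2 * y ≤ 8 := by
    have hypos : (0:ℝ) < y := by linarith
    have h3 : (δ ^ 2 * y) * y ≤ 8 * y := by
      calc (δ ^ 2 * y) * y = δ ^ 2 * y ^ 2 := by ring
      _ ≤ 8 * y := hB
    exact le_of_mul_le_mul_right h3 hypos
  have hNy : δ ^ 2 * N < δ ^ 2 * y := mul_lt_mul_of_pos_left hy hδsq
  have hNval : δ ^ 2 * N = 36 * δ ^ 2 + 8 := by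
    rw [hNdef]; field_simp
  linarith [hNy, h2, hNval, hδsq]


/-- For `f(z,λ) = (z² + λ²)(λz − 1)²` and
`F(x,y,z,λ) = (x² − y + y²f(z,λ), λ)`, the map `F` is not locally topologically
trivial at `(1,0)`: there is no open neighborhood `D` of `(1,0)` and homeomorphism
`Φ : F⁻¹(D) ≃ F⁻¹(1,0) × D` commuting with the projection to `D`. -/
theorem stmt_10 (f : ℝ × ℝ → ℝ)
    (hf : ∀ z l : ℝ, f (z, l) = (z ^ 2 + l ^ 2) * (l * z - 1) ^ 2)
    (F : ℝ × ℝ × ℝ × ℝ → ℝ × ℝ)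
    (hF : ∀ x y z l : ℝ, F (x, y, z, l) = (x ^ 2 - y + y ^ 2 * f (z, l), l)) :
    ¬ ∃ (D : Set (ℝ × ℝ)), IsOpen D ∧ ((1 : ℝ), (0 : ℝ)) ∈ D ∧
      ∃ Φ : (F ⁻¹' D) ≃ₜ (F ⁻¹' {((1 : ℝ), (0 : ℝ))}) × D,
        ∀ p : F ⁻¹' D, ((Φ p).2 : ℝ × ℝ) = F p := by
  rintro ⟨D, hD, hD0, Φ, hΦ⟩
  have hFe : F = fun p : ℝ × ℝ × ℝ × ℝ =>
      (p.1 ^ 2 - p.2.1 + p.2.1 ^ 2 *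
        ((p.2.2.1 ^ 2 + p.2.2.2 ^ 2) * (p.2.2.2 * p.2.2.1 - 1) ^ 2), p.2.2.2) := by
    funext p
    obtain ⟨x, y, z, l⟩ := p
    rw [hF x y z l, hf z l]
  have hFc : Continuous F := by rw [hFe]; fun_prop
  -- choose δ
  obtain ⟨ε, hε, hball⟩ := Metric.isOpen_iff.mp hD _ hD0
  set δ : ℝ := min (1/4) (ε/2) with hδdef
  have hδpos : 0 < δ := lt_min (by norm_num) (by linarith)
  have hδ14 : δ ≤ 1/4 := min_le_left _ _
  have hsegD : ∀ l : ℝ, 0 ≤ l → l ≤ δ → ((1 : ℝ), l) ∈ D := by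
    intro l h0 h1
    apply hball
    rw [Metric.mem_ball, Prod.dist_eq]
    simp only [Real.dist_eq]
    have h2 : δ ≤ ε/2 := min_le_right _ _
    have : |l - 0| < ε := by rw [abs_of_nonneg (by linarith)]; linarith
    simpa using this
  set seg : Set (ℝ × ℝ) := (fun l : ℝ => ((1 : ℝ), l)) '' Set.Icc 0 δ with hsegdef
  have hsegc : IsCompact seg := isCompact_Icc.image (by fun_prop)
  have hsegcl : IsClosed seg := hsegc.isClosed
  have hsegsub : seg ⊆ D := by
    rintro t ⟨l, ⟨h0, h1⟩, rfl⟩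
    exact hsegD l h0 h1
  have hmemseg : ∀ c l : ℝ, ((c, l) ∈ seg ↔ (c = 1 ∧ 0 ≤ l ∧ l ≤ δ)) := by
    intro c l
    constructor
    · rintro ⟨l', ⟨h0, h1⟩, heq⟩
      rw [Prod.mk.injEq] at heq
      exact ⟨heq.1.symm, heq.2 ▸ ⟨h0, h1⟩⟩
    · rintro ⟨rfl, h0, h1⟩
      exact ⟨l, ⟨h0, h1⟩, rfl⟩
  set E : Set (ℝ × ℝ × ℝ × ℝ) := F ⁻¹' seg with hEdef
  have hEcl : IsClosed E := hsegcl.preimage hFc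
  have hED : E ⊆ F ⁻¹' D := fun p hp => hsegsub hp
  have hmemE : ∀ x y z l : ℝ, (((x, y, z, l) : ℝ × ℝ × ℝ × ℝ) ∈ E ↔
      (x ^ 2 - y + y ^ 2 * ((z ^ 2 + l ^ 2) * (l * z - 1) ^ 2) = 1 ∧ 0 ≤ l ∧ l ≤ δ)) := by
    intro x y z l
    rw [hEdef, Set.mem_preimage, hF x y z l, hf z l, hmemseg]
  -- constant N
  set N : ℝ := 36 + 8 / δ ^ 2 with hNdef
  have hN36 : (36 : ℝ) ≤ N := by
    have h8 : (0:ℝ) < 8 / δ ^ 2 := by positivity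
    rw [hNdef]
    linarith
  -- compact: E ∩ closed ball N, inside the subtype
  set CN : Set (ℝ × ℝ × ℝ × ℝ) := E ∩ Metric.closedBall 0 N with hCNdef
  have hCNc : IsCompact CN := (isCompact_closedBall 0 N).inter_left hEcl
  have hCNsub : CN ⊆ F ⁻¹' D := fun p hp => hED hp.1
  set subC : Set ↥(F ⁻¹' D) := Subtype.val ⁻¹' CN with hsubCdef
  have hsubCc : IsCompact subC := by
    rw [Subtype.isCompact_iff, Subtype.image_preimage_coe,
      Set.inter_eq_right.mpr hCNsub]
    exact hCNc
  set K1 : Set (ℝ × ℝ × ℝ × ℝ) :=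
    (fun q : ↥(F ⁻¹' D) => (((Φ q).1 : ↥(F ⁻¹' {((1:ℝ),(0:ℝ))})) : ℝ × ℝ × ℝ × ℝ)) '' subC
    with hK1def
  have hK1c : IsCompact K1 :=
    hsubCc.image (continuous_subtype_val.comp (continuous_fst.comp Φ.continuous))
  obtain ⟨R, hR⟩ := hK1c.isBounded.subset_closedBall 0
  -- fiber over (1,0)
  have hfibcl : IsClosed (F ⁻¹' {((1:ℝ),(0:ℝ))}) := isClosed_singleton.preimage hFc
  set K' : Set ↥(F ⁻¹' {((1:ℝ),(0:ℝ))}) := Subtype.val ⁻¹' Metric.closedBall 0 R with hK'def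
  have hK'c : IsCompact K' := by
    rw [Subtype.isCompact_iff, Subtype.image_preimage_coe]
    exact (isCompact_closedBall 0 R).inter_left hfibcl
  set seg' : Set ↥D := Subtype.val ⁻¹' seg with hseg'def
  have hseg'c : IsCompact seg' := by
    rw [Subtype.isCompact_iff, Subtype.image_preimage_coe,
      Set.inter_eq_right.mpr hsegsub]
    exact hsegc
  set Lset : Set (ℝ × ℝ × ℝ × ℝ) :=
    (fun q : ↥(F ⁻¹' {((1:ℝ),(0:ℝ))}) × ↥D => ((Φ.symm q : ↥(F ⁻¹' D)) : ℝ × ℝ × ℝ × ℝ)) ''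
      (K' ×ˢ seg') with hLdef
  have hLc : IsCompact Lset :=
    (hK'c.prod hseg'c).image (continuous_subtype_val.comp Φ.symm.continuous)
  obtain ⟨M0, hM0⟩ := hLc.isBounded.subset_closedBall 0
  set M : ℝ := max M0 0 with hMdef
  have hMnonneg : 0 ≤ M := le_max_right _ _
  have hM : Lset ⊆ Metric.closedBall 0 M :=
    hM0.trans (Metric.closedBall_subset_closedBall (le_max_left _ _))
  -- choose the parameter λ̃ and the height u
  have hMN2 : (0:ℝ) < M + N + 2 := by nlinarith [hN36, hMnonneg]
  set lam : ℝ := min δ (1 / Real.sqrt (M + N + 2)) with hlamdef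
  have hsqrtpos : 0 < Real.sqrt (M + N + 2) := Real.sqrt_pos.mpr hMN2
  have hlampos : 0 < lam := lt_min hδpos (by positivity)
  have hlamδ : lam ≤ δ := min_le_left _ _
  have hlamsq : lam ^ 2 ≤ 1 / (M + N + 2) := by
    have h1 : lam ≤ 1 / Real.sqrt (M + N + 2) := min_le_right _ _
    have h2 : (1 / Real.sqrt (M + N + 2)) ^ 2 = 1 / (M + N + 2) := by
      rw [div_pow, one_pow, Real.sq_sqrt hMN2.le]
    nlinarith [hlampos.le]
  set s : ℝ := Real.sqrt (1 + 4 * lam ^ 2) with hsdef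
  have hs2 : s ^ 2 = 1 + 4 * lam ^ 2 := Real.sq_sqrt (by positivity)
  have hs1 : 1 ≤ s := by nlinarith [Real.sqrt_nonneg (1 + 4 * lam ^ 2), hs2, sq_nonneg lam]
  set u : ℝ := (1 + s) / (2 * lam ^ 2) with hudef
  have hlamsqpos : (0:ℝ) < lam ^ 2 := by positivity
  have huru : lam ^ 2 * u ^ 2 = u + 1 := by
    rw [hudef]
    field_simp
    nlinarith [hs2]
  have hulow : 1 / lam ^ 2 ≤ u := by
    rw [hudef]
    rw [div_le_div_iff₀ hlamsqpos (by positivity)]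
    nlinarith [hs1, hlamsqpos]
  have huM : M + N + 2 ≤ u := by
    have h1 : (M + N + 2) * lam ^ 2 ≤ 1 := by
      calc (M + N + 2) * lam ^ 2 ≤ (M + N + 2) * (1 / (M + N + 2)) :=
        mul_le_mul_of_nonneg_left hlamsq hMN2.le
      _ = 1 := by field_simp
    calc M + N + 2 ≤ 1 / lam ^ 2 := by
          rw [le_div_iff₀ hlamsqpos]; exact h1
    _ ≤ u := hulow
  -- the point w
  set w : ℝ × ℝ × ℝ × ℝ := ((0:ℝ), u, (0:ℝ), lam) with hwdef
  have hwE : w ∈ E := by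
    rw [hwdef, hmemE]
    refine ⟨by linear_combination huru, hlampos.le, hlamδ⟩
  have hwD : w ∈ F ⁻¹' D := hED hwE
  set w' : ↥(F ⁻¹' D) := ⟨w, hwD⟩ with hw'def
  set a : ↥(F ⁻¹' {((1:ℝ),(0:ℝ))}) := (Φ w').1 with hadef
  set t2 : ↥D := (Φ w').2 with ht2def
  have hFw : F w = ((1:ℝ), lam) := by
    rw [hwdef, hF 0 u 0 lam, hf 0 lam, Prod.mk.injEq]
    exact ⟨by linear_combination huru, rfl⟩
  have ht2 : (t2 : ℝ × ℝ) = ((1:ℝ), lam) := by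
    rw [ht2def, hΦ w']
    exact hFw
  have hwnorm : M + N + 2 ≤ ‖w‖ := by
    have := aux_normy 0 u 0 lam
    have hu0 : 0 ≤ u := by linarith [huM, hMN2.le]
    rw [abs_of_nonneg hu0] at this
    calc M + N + 2 ≤ u := huM
    _ ≤ ‖w‖ := this
  -- the image point a is far away
  have haR : R < ‖(a : ℝ × ℝ × ℝ × ℝ)‖ := by
    by_contra hcon
    push_neg at hcon
    have haK : a ∈ K' := by
      rw [hK'def, Set.mem_preimage, mem_closedBall_zero_iff]
      exact hcon
    have ht2' : t2 ∈ seg' := by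
      rw [hseg'def, Set.mem_preimage, ht2]
      exact ⟨lam, ⟨hlampos.le, hlamδ⟩, rfl⟩
    have hwL : w ∈ Lset := by
      rw [hLdef]
      refine ⟨(a, t2), ⟨haK, ht2'⟩, ?_⟩
      have heq2 : ((a, t2) : ↥(F ⁻¹' {((1:ℝ),(0:ℝ))}) × ↥D) = Φ w' := by
        rw [hadef, ht2def]
      show ((Φ.symm (a, t2) : ↥(F ⁻¹' D)) : ℝ × ℝ × ℝ × ℝ) = w
      rw [heq2, Φ.symm_apply_apply]
    have := hM hwL
    rw [mem_closedBall_zero_iff] at this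
    linarith [hwnorm, hN36, hMnonneg]
  -- clamp function and the vertical path
  set c : ℝ → ℝ := fun l => max 0 (min l δ) with hcdef
  have hc_cont : Continuous c := by fun_prop
  have hc_mem : ∀ l : ℝ, 0 ≤ c l ∧ c l ≤ δ :=
    fun l => ⟨le_max_left _ _, max_le hδpos.le (min_le_right _ _)⟩
  have hc_id : ∀ l : ℝ, 0 ≤ l → l ≤ δ → c l = l := by
    intro l h0 h1
    rw [hcdef]
    simp only [min_eq_left h1, max_eq_right h0]
  set tm : ℝ → ↥D := fun l => ⟨((1:ℝ), c l), hsegD _ (hc_mem l).1 (hc_mem l).2⟩ with htmdef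
  have htm_cont : Continuous tm := Continuous.subtype_mk (by fun_prop) _
  set V : ℝ → ℝ × ℝ × ℝ × ℝ :=
    fun l => ((Φ.symm (a, tm l) : ↥(F ⁻¹' D)) : ℝ × ℝ × ℝ × ℝ) with hVdef
  have hV_cont : Continuous V := by
    apply continuous_subtype_val.comp
    exact Φ.symm.continuous.comp (continuous_const.prodMk htm_cont)
  have hVF : ∀ l : ℝ, F (V l) = ((1:ℝ), c l) := by
    intro l
    have h1 := hΦ (Φ.symm (a, tm l))
    rw [Φ.apply_symm_apply] at h1
    exact h1.symm
  have hVE : ∀ l : ℝ, V l ∈ E := by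
    intro l
    rw [hEdef, Set.mem_preimage, hVF l]
    exact ⟨c l, ⟨(hc_mem l).1, (hc_mem l).2⟩, rfl⟩
  have hVw : V lam = w := by
    have h1 : tm lam = t2 := by
      apply Subtype.ext
      rw [ht2]
      show ((1:ℝ), c lam) = ((1:ℝ), lam)
      rw [hc_id lam hlampos.le hlamδ]
    rw [hVdef]
    show ((Φ.symm (a, tm lam) : ↥(F ⁻¹' D)) : ℝ × ℝ × ℝ × ℝ) = w
    rw [h1]
    have : ((a, t2) : ↥(F ⁻¹' {((1:ℝ),(0:ℝ))}) × ↥D) = Φ w' := by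
      rw [hadef, ht2def]
    rw [this, Φ.symm_apply_apply]
  have hVN : ∀ l : ℝ, N < ‖V l‖ := by
    intro l
    by_contra hcon
    push_neg at hcon
    have hmem : V l ∈ CN := ⟨hVE l, mem_closedBall_zero_iff.mpr hcon⟩
    have hq : (Φ.symm (a, tm l)) ∈ subC := by
      rw [hsubCdef, Set.mem_preimage]
      exact hmem
    have hK1mem : (((Φ (Φ.symm (a, tm l))).1 : ↥(F ⁻¹' {((1:ℝ),(0:ℝ))})) : ℝ × ℝ × ℝ × ℝ) ∈ K1 :=
      ⟨_, hq, rfl⟩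
    rw [Φ.apply_symm_apply] at hK1mem
    have := hR hK1mem
    rw [mem_closedBall_zero_iff] at this
    linarith [haR]
  -- the image of [0, δ] under V is preconnected
  set Vset : Set (ℝ × ℝ × ℝ × ℝ) := V '' Set.Icc 0 δ with hVsetdef
  have hVpre : IsPreconnected Vset := isPreconnected_Icc.image V hV_cont.continuousOn
  -- two disjoint open sets
  set uSet : Set (ℝ × ℝ × ℝ × ℝ) := {p | N < ‖p‖ ∧ |p.2.2.1| < 3/2} with huSetdef
  set vSet : Set (ℝ × ℝ × ℝ × ℝ) := {p | 3/2 < |p.2.2.1|} with hvSetdef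
  have huOpen : IsOpen uSet := by
    apply IsOpen.inter
    · exact isOpen_lt continuous_const continuous_norm
    · exact isOpen_lt
        ((continuous_fst.comp (continuous_snd.comp continuous_snd)).abs) continuous_const
  have hvOpen : IsOpen vSet := isOpen_lt continuous_const
    ((continuous_fst.comp (continuous_snd.comp continuous_snd)).abs)
  have hdisj : Disjoint uSet vSet := by
    rw [Set.disjoint_left]
    rintro p ⟨_, h1⟩ h2
    exact lt_asymm h1 h2
  -- Vset ⊆ uSet ∪ vSet
  have hsub : Vset ⊆ uSet ∪ vSet := by
    rintro p ⟨l, hl, rfl⟩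
    have hE' := hVE l
    have hN' := hVN l
    obtain ⟨x, y, z, lc, hp⟩ : ∃ x y z lc, V l = ((x, y, z, lc) : ℝ × ℝ × ℝ × ℝ) :=
      ⟨(V l).1, (V l).2.1, (V l).2.2.1, (V l).2.2.2, rfl⟩
    rw [hp] at hE' hN' ⊢
    rcases lt_or_ge |z| (3/2) with h | h
    · exact Or.inl ⟨hN', h⟩
    · rcases le_or_gt |z| 2 with h2 | h2
      · rw [hmemE] at hE'
        obtain ⟨heq', hl0', hlδ'⟩ := hE'
        exact absurd (aux_gap x y z lc δ hδ14 heq' hl0' hlδ' h h2)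
          (by push_neg; linarith [hN36])
      · exact Or.inr (by show (3:ℝ)/2 < |z|; linarith)
  -- w is in Vset ∩ uSet
  have hne : (Vset ∩ uSet).Nonempty := by
    refine ⟨w, ⟨lam, ⟨hlampos.le, hlamδ⟩, hVw⟩, ⟨?_, ?_⟩⟩
    · linarith [hwnorm, hMnonneg]
    · rw [hwdef]
      show |(0:ℝ)| < 3/2
      norm_num
  have hVu : Vset ⊆ uSet :=
    IsPreconnected.subset_left_of_subset_union huOpen hvOpen hdisj hsub hne hVpre
  -- now look at V δ
  have hVδmem : V δ ∈ uSet := hVu ⟨δ, ⟨hδpos.le, le_refl δ⟩, rfl⟩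
  have hVδE := hVE δ
  have hVδF : F (V δ) = ((1:ℝ), δ) := by
    rw [hVF δ, hc_id δ hδpos.le (le_refl δ)]
  obtain ⟨x, y, z, l, hp⟩ : ∃ x y z l, V δ = ((x, y, z, l) : ℝ × ℝ × ℝ × ℝ) :=
    ⟨(V δ).1, (V δ).2.1, (V δ).2.2.1, (V δ).2.2.2, rfl⟩
  rw [hp] at hVδmem hVδE hVδF
  obtain ⟨hNlt, hzlt⟩ := hVδmem
  rw [hF x y z l, Prod.mk.injEq] at hVδF
  obtain ⟨-, hlδeq⟩ := hVδF
  subst hlδeq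
  rw [hmemE] at hVδE
  obtain ⟨heq, hδ0', -⟩ := hVδE
  exact aux_final x y z δ N hδpos hδ14 hNdef heq hzlt hNlt
end

section
/- Define f : ℂ⁴ → ℂ by f(x,y,z,λ) = x(y² + λz − 1)(λy² + λ²z − λ + 1) and F : ℂ⁴ → ℂ² by F(x,y,z,λ) = (f(x,y,z,λ), λ). Let b, λ ∈ ℂ with b ≠ 0 and λ ≠ 0. Then the map h : ℂ × (ℂ \ {0, −1/λ}) → ℂ⁴ defined by h(u,v) = (b/(v(λv + 1)), u, (v − u² + 1)/λ, λ) is injective, its image is exactly the fiber F⁻¹(b,λ), its inverse on the fiber is (x,y,z,λ) ↦ (y, y² + λz − 1), and h is a homeomorphism onto F⁻¹(b,λ). -/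
/-!
Writing `w = y² + λz − 1`, the second factor of `f` is `λw + 1`, so
`f = x · w(λw + 1)`. For `λ ≠ 0` the coordinates `(y, w)` determine `z`, and on the fiber
`f = b ≠ 0` they also determine `x = b / (w(λw + 1))` and range exactly over the plane minus the
zeros of `w(λw + 1)`, i.e. `w ∉ {0, −1/λ}`. Thus the fiber is the graph of a continuous function
over `ℂ × (ℂ \ {0, −1/λ})`, and `h` is its parametrisation with continuous inverse `p ↦ (y, w)`.
-/

open Set Topology

section Field

variable {K : Type*} [Field K]

theorem mul_mul_add_one_ne_zero_iff {l v : K} : v * (l * v + 1) ≠ 0 ↔ v ≠ 0 ∧ v ≠ -1 / l := by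
  rcases eq_or_ne l 0 with rfl | hl
  · simp
  · rw [mul_ne_zero_iff, ne_eq (l * v + 1), ne_eq v (-1 / l), eq_div_iff hl,
      ← eq_neg_iff_add_eq_zero, mul_comm]

def fiberParam (b l : K) (q : K × K) : K × K × K × K :=
  (b / (q.2 * (l * q.2 + 1)), q.1, (q.2 - q.1 ^ 2 + 1) / l, l)

def fiberCoords (l : K) (p : K × K × K × K) : K × K :=
  (p.2.1, p.2.1 ^ 2 + l * p.2.2.1 - 1)

/-- The factorised form `x · w(λw + 1)` of `f`, with the fixed `l` in place of the last coordinate. -/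
def fiberPoly (l : K) (p : K × K × K × K) : K :=
  p.1 * ((fiberCoords l p).2 * (l * (fiberCoords l p).2 + 1))

theorem leftInverse_fiberCoords_fiberParam {l : K} (hl : l ≠ 0) (b : K) :
    Function.LeftInverse (fiberCoords l) (fiberParam b l) := by
  intro q
  simp only [fiberCoords, fiberParam]
  congr 1
  field_simp
  ring

theorem fiberParam_fiberCoords {b l : K} (hl : l ≠ 0) {p : K × K × K × K} (hpl : p.2.2.2 = l)
    (hpb : fiberPoly l p = b) (hb : b ≠ 0) :
    fiberParam b l (fiberCoords l p) = p := by
  obtain ⟨x, y, z, m⟩ := p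
  subst hpl hpb
  have hw := right_ne_zero_of_mul hb
  simp only [fiberParam, fiberCoords] at hw ⊢
  refine Prod.ext (mul_div_cancel_right₀ x hw) (Prod.ext rfl (Prod.ext ?_ rfl))
  field_simp
  ring

theorem fiberPoly_fiberParam {b l : K} (hl : l ≠ 0) {q : K × K} (hq : q.2 * (l * q.2 + 1) ≠ 0) :
    fiberPoly l (fiberParam b l q) = b := by
  rw [fiberPoly, leftInverse_fiberCoords_fiberParam hl b q]
  exact div_mul_cancel₀ b hq

variable [TopologicalSpace K] [IsTopologicalDivisionRing K]

theorem continuousOn_fiberParam (b l : K) :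
    ContinuousOn (fiberParam b l) {q | q.2 * (l * q.2 + 1) ≠ 0} := by
  refine ContinuousOn.prodMk ?_ (Continuous.continuousOn (by fun_prop))
  exact continuousOn_const.div (by fun_prop) fun _ hq => hq

theorem continuous_fiberCoords (l : K) : Continuous (fiberCoords l) := by
  unfold fiberCoords
  fun_prop

end Field

/-- For `f(x,y,z,λ) = x(y² + λz − 1)(λy² + λ²z − λ + 1)`,
`F = (f, λ)`, `b ≠ 0`, `λ ≠ 0`, the map
`h(u,v) = (b/(v(λv + 1)), u, (v − u² + 1)/λ, λ)` on `ℂ × (ℂ \ {0, −1/λ})` is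
injective, has image exactly `F⁻¹(b,λ)`, has inverse `(x,y,z,λ) ↦ (y, y² + λz − 1)`,
and is a homeomorphism onto `F⁻¹(b,λ)`. -/
theorem stmt_15 (f : ℂ × ℂ × ℂ × ℂ → ℂ)
    (hf : ∀ x y z l : ℂ, f (x, y, z, l) =
      x * (y ^ 2 + l * z - 1) * (l * y ^ 2 + l ^ 2 * z - l + 1))
    (F : ℂ × ℂ × ℂ × ℂ → ℂ × ℂ)
    (hF : ∀ p : ℂ × ℂ × ℂ × ℂ, F p = (f p, p.2.2.2))
    (b l : ℂ) (hb : b ≠ 0) (hl : l ≠ 0)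
    (h : ℂ × {v : ℂ // v ≠ 0 ∧ v ≠ -1 / l} → ℂ × ℂ × ℂ × ℂ)
    (hh : ∀ q : ℂ × {v : ℂ // v ≠ 0 ∧ v ≠ -1 / l},
      h q = (b / ((q.2 : ℂ) * (l * (q.2 : ℂ) + 1)), q.1,
        ((q.2 : ℂ) - q.1 ^ 2 + 1) / l, l)) :
    Function.Injective h ∧
    Set.range h = F ⁻¹' {(b, l)} ∧
    (∀ p ∈ F ⁻¹' {(b, l)},
      ∃ hm : p.2.1 ^ 2 + l * p.2.2.1 - 1 ≠ 0 ∧ p.2.1 ^ 2 + l * p.2.2.1 - 1 ≠ -1 / l,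
        h (p.2.1, ⟨p.2.1 ^ 2 + l * p.2.2.1 - 1, hm⟩) = p) ∧
    ∃ Φ : (ℂ × {v : ℂ // v ≠ 0 ∧ v ≠ -1 / l}) ≃ₜ (F ⁻¹' {(b, l)} : Set (ℂ × ℂ × ℂ × ℂ)),
      ∀ q, (Φ q : ℂ × ℂ × ℂ × ℂ) = h q := by
  have h_eq : h = fiberParam b l ∘ Prod.map id Subtype.val := funext hh
  have mem_fiber : ∀ p, p ∈ F ⁻¹' {(b, l)} ↔ fiberPoly l p = b ∧ p.2.2.2 = l := by
    rintro ⟨x, y, z, m⟩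
    simp only [mem_preimage, mem_singleton_iff, hF, hf, Prod.mk.injEq, fiberPoly, fiberCoords]
    refine and_congr_left fun hm => ?_
    subst hm
    constructor <;> intro h1 <;> linear_combination h1
  have inv : ∀ p ∈ F ⁻¹' {(b, l)},
      ∃ hm : p.2.1 ^ 2 + l * p.2.2.1 - 1 ≠ 0 ∧ p.2.1 ^ 2 + l * p.2.2.1 - 1 ≠ -1 / l,
        h (p.2.1, ⟨p.2.1 ^ 2 + l * p.2.2.1 - 1, hm⟩) = p := by
    intro p hp
    obtain ⟨hpb, hpl⟩ := (mem_fiber p).1 hp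
    exact ⟨mul_mul_add_one_ne_zero_iff.1 (right_ne_zero_of_mul (hpb ▸ hb)),
      h_eq ▸ fiberParam_fiberCoords hl hpl hpb hb⟩
  have range_eq : range h = F ⁻¹' {(b, l)} := by
    refine Subset.antisymm ?_ fun p hp => ⟨_, (inv p hp).2⟩
    rintro _ ⟨q, rfl⟩
    rw [mem_fiber, h_eq]
    exact ⟨fiberPoly_fiberParam hl (mul_mul_add_one_ne_zero_iff.2 q.2.2), rfl⟩
  have h_cont : Continuous h := h_eq ▸ (continuousOn_fiberParam b l).comp_continuous
    (continuous_id.prodMap continuous_subtype_val) fun q => mul_mul_add_one_ne_zero_iff.2 q.2.2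
  have h_emb : IsEmbedding h := .of_comp h_cont (continuous_fiberCoords l) <| by
    rw [h_eq, ← Function.comp_assoc, (leftInverse_fiberCoords_fiberParam hl b).comp_eq_id,
      Function.id_comp]
    exact IsEmbedding.id.prodMap .subtypeVal
  exact ⟨h_emb.injective, range_eq, inv, h_emb.toHomeomorph.trans (.setCongr range_eq),
    fun _ => rfl⟩
end

section
/- The loops δ₁, δ₂ : 𝕊¹ → ℂ \ {−1,1} given by δ₁(θ) = 1 + e^{iθ} and δ₂(θ) = −1 + e^{iθ} are NOT freely homotopic in ℂ \ {−1,1}, i.e., they are not homotopic as continuous maps from the circle 𝕊¹ to ℂ \ {−1,1}. -/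
/-!
Lift the homotopy `(t, s) ↦ H(t, e^{is}) - 1`, which avoids `0`, through `exp : ℂ → ℂ \ {0}`.
For each `t` the lift `L(t, ·)` is a continuous logarithm of a loop, so `L(t, 2π) - L(t, 0)`
lies in the discrete set `2πiℤ`; being continuous in `t`, it is constant. At `t = 0` the loop is
`s ↦ e^{is}` with lift `s ↦ is`, giving `2πi`. At `t = 1` the loop `s ↦ e^{is} - 2` stays in the
left half-plane, where `πi + log(-z)` is a continuous logarithm, giving `0`.
-/

open Complex Real

namespace Complex

theorem sub_eq_sub_of_exp_eq {A : Type*} [TopologicalSpace A] [PreconnectedSpace A]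
    {f g : A → ℂ} (hf : Continuous f) (hg : Continuous g) (h : ∀ a, exp (f a) = exp (g a))
    (a b : A) : f a - g a = f b - g b := by
  refine isPreconnected_univ.constant_of_mapsTo
    (isDiscrete_iff_discreteTopology.2 (NormedSpace.discreteTopology_zmultiples (2 * π * I)))
    (hf.sub hg).continuousOn (fun x _ ↦ ?_) trivial trivial
  obtain ⟨n, hn⟩ := exp_eq_exp_iff_exists_int.1 (h x)
  exact ⟨n, by simp [hn]⟩

theorem eq_of_exp_eq_of_neg_exp_mem_slitPlane {A : Type*} [TopologicalSpace A]
    [PreconnectedSpace A] {f : A → ℂ} (hf : Continuous f) (hslit : ∀ a, -exp (f a) ∈ slitPlane)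
    {a b : A} (hab : exp (f a) = exp (f b)) : f a = f b := by
  have hlog : ∀ a, exp (f a) = exp (π * I + log (-exp (f a))) := fun a ↦ by
    rw [exp_add, exp_log (neg_ne_zero.2 (exp_ne_zero _)), exp_pi_mul_I]; ring
  have := sub_eq_sub_of_exp_eq (g := fun a ↦ π * I + log (-exp (f a))) hf
    (continuous_const.add (hf.cexp.neg.clog hslit)) hlog a b
  rwa [hab, sub_left_inj] at this

theorem exists_exp_lift_of_homotopy {A : Type*} [TopologicalSpace A]
    (F : C(unitInterval × A, ℂ)) (hF : ∀ p, F p ≠ 0) (f : C(A, ℂ))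
    (hf : ∀ a, exp (f a) = F (0, a)) :
    ∃ L : C(unitInterval × A, ℂ), (∀ p, exp (L p) = F p) ∧ ∀ a, L (0, a) = f a := by
  let F' : C(unitInterval × A, {z : ℂ // z ≠ 0}) := ⟨fun p ↦ ⟨F p, hF p⟩, by fun_prop⟩
  have hF'₀ : ∀ a, F' (0, a) = ⟨exp (f a), exp_ne_zero _⟩ := fun a ↦ Subtype.ext (hf a).symm
  exact ⟨isCoveringMap_exp.liftHomotopy F' f hF'₀,
    fun p ↦ congr_arg Subtype.val (congr_fun (isCoveringMap_exp.liftHomotopy_lifts F' f hF'₀) p),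
    isCoveringMap_exp.liftHomotopy_zero F' f hF'₀⟩

end Complex

/-- The loops `δ₁(θ) = 1 + e^{iθ}` and `δ₂(θ) = −1 + e^{iθ}` are NOT
freely homotopic in `ℂ \ {−1, 1}`: there is no homotopy between them avoiding both
`−1` and `1`. -/
theorem stmt_17 (δ₁ δ₂ : C(Circle, ℂ))
    (hδ₁ : ∀ w : Circle, δ₁ w = 1 + (w : ℂ))
    (hδ₂ : ∀ w : Circle, δ₂ w = -1 + (w : ℂ)) :
    ¬ ∃ H : ContinuousMap.Homotopy δ₁ δ₂,
        ∀ p : unitInterval × Circle, H p ≠ -1 ∧ H p ≠ 1 := by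
  rintro ⟨H, hH⟩
  obtain ⟨L, hL, hL₀⟩ := exists_exp_lift_of_homotopy
    ⟨fun p : unitInterval × ℝ ↦ H (p.1, Circle.exp p.2) - 1, by fun_prop⟩
    (fun p ↦ sub_ne_zero.2 (hH _).2) ⟨fun s : ℝ ↦ s * I, by fun_prop⟩
    (fun s ↦ by simp [hδ₁, Circle.coe_exp])
  simp only [ContinuousMap.coe_mk] at hL hL₀
  have hwinding := sub_eq_sub_of_exp_eq (f := fun t ↦ L (t, 2 * π)) (g := fun t ↦ L (t, 0))
    (by fun_prop) (by fun_prop) (fun t ↦ by simp [hL, Circle.exp_two_pi]) 0 1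
  have hwinding₀ : L (0, 2 * π) - L (0, 0) = 2 * π * I := by simp [hL₀]
  have hwinding₁ : L (1, 2 * π) = L (1, 0) := by
    refine eq_of_exp_eq_of_neg_exp_mem_slitPlane (f := fun s ↦ L (1, s)) (by fun_prop)
      (fun s ↦ mem_slitPlane_iff.2 (Or.inl ?_)) (by simp [hL, Circle.exp_two_pi])
    have : Real.cos s < 1 + 1 := by linarith [Real.cos_le_one s]
    simpa [hL, hδ₂, Circle.coe_exp]
  rw [hwinding₀, hwinding₁, sub_self] at hwinding
  simp [pi_ne_zero, I_ne_zero] at hwinding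
end

section
/- For every b ∈ ℂ with b ≠ 0 there exists ε > 0 such that for every λ ∈ ℂ with 0 < |λ| < ε, the loops Γ₁, Γ₂ : 𝕊¹ → ℂ × (ℂ \ {0, −1/λ}) given by Γ₁(θ) = (1 + e^{iθ}, e^{iθ}(e^{iθ} + 2)) and Γ₂(θ) = (−1 + e^{iθ}, e^{iθ}(e^{iθ} − 2)) are well defined (their second components avoid 0 and −1/λ) and freely homotopic in ℂ × (ℂ \ {0, −1/λ}). -/
/-! The second components of both loops have the form `u (u + 2)` with `|u| = 1`: such a value
is nonzero (as `u ≠ 0, -2`) and has modulus at most `3 < |1/λ|`. Rotating `u = w` to `u = -w`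
through `u = e^{iπt} w` while sliding the first component from `1 + w` to `-1 + w` is therefore
a homotopy that avoids `0` and `-1/λ` throughout. -/

open Complex

lemma mul_add_two_ne_zero_of_norm_eq_one {u : ℂ} (hu : ‖u‖ = 1) : u * (u + 2) ≠ 0 := by
  refine mul_ne_zero (norm_ne_zero_iff.mp (by simp [hu])) fun h => ?_
  rw [add_eq_zero_iff_eq_neg.mp h] at hu
  norm_num at hu

lemma norm_mul_add_two_le_three_of_norm_eq_one {u : ℂ} (hu : ‖u‖ = 1) : ‖u * (u + 2)‖ ≤ 3 := by
  calc ‖u * (u + 2)‖ = ‖u + 2‖ := by rw [norm_mul, hu, one_mul]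
    _ ≤ ‖u‖ + ‖(2 : ℂ)‖ := norm_add_le _ _
    _ = 3 := by rw [hu]; norm_num

lemma mul_add_two_ne_of_norm_eq_one {u c : ℂ} (hu : ‖u‖ = 1) (hc : 3 < ‖c‖) :
    u * (u + 2) ≠ 0 ∧ u * (u + 2) ≠ c := by
  refine ⟨mul_add_two_ne_zero_of_norm_eq_one hu, fun h => ?_⟩
  have := norm_mul_add_two_le_three_of_norm_eq_one hu
  rw [h] at this
  linarith

lemma three_lt_norm_neg_one_div {l : ℂ} (hl : 0 < ‖l‖) (hl3 : ‖l‖ < 1 / 3) : 3 < ‖-1 / l‖ := by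
  rw [norm_div, norm_neg, norm_one, lt_div_iff₀ hl]
  linarith

lemma exists_homotopy_mul_add_two (Γ₁ Γ₂ : C(Circle, ℂ × ℂ))
    (hΓ₁ : ∀ w : Circle, Γ₁ w = (1 + (w : ℂ), (w : ℂ) * ((w : ℂ) + 2)))
    (hΓ₂ : ∀ w : Circle, Γ₂ w = (-1 + (w : ℂ), (w : ℂ) * ((w : ℂ) - 2))) :
    ∃ H : Γ₁.Homotopy Γ₂, ∀ p, ∃ u : Circle, (H p).2 = (u : ℂ) * (u + 2) := by
  let rot : C(unitInterval × Circle, Circle) :=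
    ⟨fun p => Circle.exp (Real.pi * p.1) * p.2, by fun_prop⟩
  refine ⟨⟨⟨fun p => (((1 - 2 * (p.1 : ℝ) : ℝ) : ℂ) + p.2, (rot p : ℂ) * (rot p + 2)),
    by fun_prop⟩, fun w => ?_, fun w => ?_⟩, fun p => ⟨rot p, rfl⟩⟩
  · simp [rot, hΓ₁ w]
  · simp only [ContinuousMap.coe_mk, rot, hΓ₂ w, Circle.coe_mul, Circle.coe_exp]
    norm_num [exp_pi_mul_I]
    ring

theorem stmt_18_general
    (Γ₁ Γ₂ : C(Circle, ℂ × ℂ))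
    (hΓ₁ : ∀ w : Circle, Γ₁ w = (1 + (w : ℂ), (w : ℂ) * ((w : ℂ) + 2)))
    (hΓ₂ : ∀ w : Circle, Γ₂ w = (-1 + (w : ℂ), (w : ℂ) * ((w : ℂ) - 2))) :
    ∃ ε : ℝ, 0 < ε ∧ ∀ l : ℂ, 0 < ‖l‖ → ‖l‖ < ε →
      (∀ w : Circle, (Γ₁ w).2 ≠ 0 ∧ (Γ₁ w).2 ≠ -1 / l) ∧
      (∀ w : Circle, (Γ₂ w).2 ≠ 0 ∧ (Γ₂ w).2 ≠ -1 / l) ∧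
      ∃ H : ContinuousMap.Homotopy Γ₁ Γ₂,
        ∀ p : unitInterval × Circle, (H p).2 ≠ 0 ∧ (H p).2 ≠ -1 / l := by
  refine ⟨1 / 3, by norm_num, fun l hl hl3 => ?_⟩
  have hc := three_lt_norm_neg_one_div hl hl3
  obtain ⟨H, hH⟩ := exists_homotopy_mul_add_two Γ₁ Γ₂ hΓ₁ hΓ₂
  refine ⟨fun w => ?_, fun w => ?_, H, fun p => ?_⟩
  · rw [hΓ₁ w]
    exact mul_add_two_ne_of_norm_eq_one (Circle.norm_coe w) hc
  · have hw : ‖-(w : ℂ)‖ = 1 := by rw [norm_neg, Circle.norm_coe]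
    rw [hΓ₂ w, show (w : ℂ) * (w - 2) = -w * (-w + 2) by ring]
    exact mul_add_two_ne_of_norm_eq_one hw hc
  · obtain ⟨u, hu⟩ := hH p
    rw [hu]
    exact mul_add_two_ne_of_norm_eq_one (Circle.norm_coe u) hc

/-- For every `b ≠ 0` there is `ε > 0` such that for every `λ` with
`0 < |λ| < ε`, the loops `Γ₁(θ) = (1 + e^{iθ}, e^{iθ}(e^{iθ} + 2))` and
`Γ₂(θ) = (−1 + e^{iθ}, e^{iθ}(e^{iθ} − 2))` take values in `ℂ × (ℂ \ {0, −1/λ})`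
and are freely homotopic there (i.e. there is a homotopy whose second component
avoids `0` and `−1/λ`). -/
theorem stmt_18 (b : ℂ) (hb : b ≠ 0)
    (Γ₁ Γ₂ : C(Circle, ℂ × ℂ))
    (hΓ₁ : ∀ w : Circle, Γ₁ w = (1 + (w : ℂ), (w : ℂ) * ((w : ℂ) + 2)))
    (hΓ₂ : ∀ w : Circle, Γ₂ w = (-1 + (w : ℂ), (w : ℂ) * ((w : ℂ) - 2))) :
    ∃ ε : ℝ, 0 < ε ∧ ∀ l : ℂ, 0 < ‖l‖ → ‖l‖ < ε →
      (∀ w : Circle, (Γ₁ w).2 ≠ 0 ∧ (Γ₁ w).2 ≠ -1 / l) ∧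
      (∀ w : Circle, (Γ₂ w).2 ≠ 0 ∧ (Γ₂ w).2 ≠ -1 / l) ∧
      ∃ H : ContinuousMap.Homotopy Γ₁ Γ₂,
        ∀ p : unitInterval × Circle, (H p).2 ≠ 0 ∧ (H p).2 ≠ -1 / l :=
  stmt_18_general Γ₁ Γ₂ hΓ₁ hΓ₂
end

section
/- Define f : ℂ⁴ → ℂ by f(x,y,z,λ) = x(y² + λz − 1)(λy² + λ²z − λ + 1) and F : ℂ⁴ → ℂ² by F(x,y,z,λ) = (f(x,y,z,λ), λ). Then F is not locally topologically trivial at the point (1,0) ∈ ℂ²: there do not exist an open neighborhood D of (1,0) in ℂ² and a homeomorphism Φ : F⁻¹(D) → F⁻¹(1,0) × D such that the composition of Φ with the projection onto D equals the restriction of F to F⁻¹(D). In particular (1,0) is a bifurcation value of F, i.e., F is not locally C^∞ trivial at (1,0). -/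
/-!
Over `λ = 0` the factor `g = λy² + λ²z − λ + 1` of `f` is identically `1`, while over a small
`λ ≠ 0` there is a loop in the fibre `f = 1` along which `g` winds once around `0`. A local
trivialization of `F` near `(1, 0)` would transport this loop, through loops in fibres
`f = 1` (where `g` never vanishes), to a loop over `λ = 0`: a homotopy in `ℂ ∖ {0}` between a
loop of winding number one and a constant loop, which the covering `exp : ℂ → ℂ ∖ {0}` forbids.
-/

open Complex Real unitInterval

theorem Complex.int_eq_zero_of_loopHomotopy_const_exp (H : C(I × I, ℂ)) (hne : ∀ x, H x ≠ 0)
    (hloop : ∀ s, H (s, 0) = H (s, 1)) (c a : ℂ) (h0 : ∀ t, H (0, t) = c) (n : ℤ)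
    (h1 : ∀ t : I, H (1, t) = a * exp (2 * π * Complex.I * n * (t : ℝ))) : n = 0 := by
  have cov := isCoveringMap_exp
  have hc : c ≠ 0 := h0 0 ▸ hne _
  let H' : C(I × I, {z : ℂ // z ≠ 0}) := ⟨fun x ↦ ⟨H x, hne x⟩, by fun_prop⟩
  let G := cov.liftHomotopy H' (.const I (log c))
    fun t ↦ Subtype.ext (by simp [H', h0, exp_log hc])
  have hG (x : I × I) : exp (G x) = H x :=
    congrArg Subtype.val (congr_fun (cov.liftHomotopy_lifts ..) x)
  have hG0 (t : I) : G (0, t) = log c := cov.liftHomotopy_zero ..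
  have closes : G (1, 1) = G (1, 0) :=
    congr_fun (cov.eq_of_comp_eq (g₁ := fun s ↦ G (s, 1)) (g₂ := fun s ↦ G (s, 0))
      (by fun_prop) (by fun_prop) (funext fun s ↦ Subtype.ext (by simp [hG, hloop])) 0
      (by simp [hG0])) 1
  have winds : (fun t ↦ G (1, t)) = fun t : I ↦ G (1, 0) + 2 * π * Complex.I * n * (t : ℝ) :=
    cov.eq_of_comp_eq (by fun_prop) (by fun_prop)
      (funext fun t ↦ Subtype.ext (by simp [exp_add, hG, h1])) 0 (by simp)
  simpa [pi_ne_zero, I_ne_zero, closes] using congr_fun winds 1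

theorem exists_loopHomotopy_of_trivialization {X Y Z : Type*} [TopologicalSpace X]
    [TopologicalSpace Y] [TopologicalSpace Z] {p : X → Y} {D : Set Y} (Φ : p ⁻¹' D ≃ₜ Z × D)
    (hΦ : ∀ x, ((Φ x).2 : Y) = p x) (c : C(I, Y)) (hc : ∀ s, c s ∈ D) (γ : C(I, X))
    (hγ : ∀ t, p (γ t) = c 1) (hγ_loop : γ 0 = γ 1) :
    ∃ Γ : C(I × I, X), (∀ s t, p (Γ (s, t)) = c s) ∧ (∀ t, Γ (1, t) = γ t) ∧
      ∀ s, Γ (s, 0) = Γ (s, 1) := by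
  have hγD (t : I) : γ t ∈ p ⁻¹' D := by rw [Set.mem_preimage, hγ]; exact hc 1
  let Γ : C(I × I, X) :=
    ⟨fun st ↦ Φ.symm ((Φ ⟨γ st.2, hγD _⟩).1, ⟨c st.1, hc _⟩), by fun_prop⟩
  refine ⟨Γ, fun s t ↦ ?_, fun t ↦ ?_, fun s ↦ ?_⟩
  · simp [Γ, ← hΦ]
  · have : (Φ ⟨γ t, hγD t⟩).2 = ⟨c 1, hc 1⟩ := Subtype.ext ((hΦ _).trans (hγ t))
    simp [Γ, ← this]
  · simp [Γ, hγ_loop]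

theorem exists_ne_zero_forall_unitInterval_mem {D : Set (ℂ × ℂ)} (hD : IsOpen D) {a : ℂ}
    (ha : (a, 0) ∈ D) : ∃ l : ℂ, l ≠ 0 ∧ ∀ s : I, (a, (s : ℝ) * l) ∈ D := by
  obtain ⟨ε, hε, hball⟩ := Metric.isOpen_iff.mp hD _ ha
  refine ⟨(ε / 2 : ℝ), ofReal_ne_zero.mpr (half_pos hε).ne', fun s ↦ hball ?_⟩
  rw [Metric.mem_ball, Prod.dist_eq, dist_self, dist_zero_right, norm_mul, norm_real, norm_real,
    Real.norm_eq_abs, Real.norm_eq_abs, abs_of_nonneg s.2.1, abs_of_pos (half_pos hε)]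
  exact max_lt hε (by nlinarith [s.2.2])

def secondFactor (q : ℂ × ℂ × ℂ × ℂ) : ℂ :=
  q.2.2.2 * q.2.1 ^ 2 + q.2.2.2 ^ 2 * q.2.2.1 - q.2.2.2 + 1

def fPoly (q : ℂ × ℂ × ℂ × ℂ) : ℂ := q.1 * (q.2.1 ^ 2 + q.2.2.2 * q.2.2.1 - 1) * secondFactor q

theorem secondFactor_of_snd_snd_snd_eq_zero {q : ℂ × ℂ × ℂ × ℂ} (hq : q.2.2.2 = 0) :
    secondFactor q = 1 := by
  simp [secondFactor, hq]

theorem secondFactor_ne_zero_of_fPoly_eq_one {q : ℂ × ℂ × ℂ × ℂ} (hq : fPoly q = 1) :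
    secondFactor q ≠ 0 :=
  right_ne_zero_of_mul_eq_one hq

/-- With `y = 0`, `z` is chosen so that `secondFactor = w`, and then `x` so that `fPoly = 1`. -/
noncomputable def fiberPoint (l w : ℂ) : ℂ × ℂ × ℂ × ℂ :=
  (l / ((w - 1) * w), 0, (w + l - 1) / l ^ 2, l)

theorem secondFactor_fiberPoint {l : ℂ} (hl : l ≠ 0) (w : ℂ) :
    secondFactor (fiberPoint l w) = w := by
  simp only [secondFactor, fiberPoint]
  field_simp
  ring

theorem fPoly_fiberPoint {l w : ℂ} (hl : l ≠ 0) (hw₀ : w ≠ 0) (hw₁ : w ≠ 1) :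
    fPoly (fiberPoint l w) = 1 := by
  have : w - 1 ≠ 0 := sub_ne_zero.mpr hw₁
  rw [fPoly, secondFactor_fiberPoint hl]
  simp only [fiberPoint]
  field_simp
  ring

theorem exists_loop_fPoly_eq_one_secondFactor_winds {l : ℂ} (hl : l ≠ 0) :
    ∃ γ : C(I, ℂ × ℂ × ℂ × ℂ), (∀ t, fPoly (γ t) = 1 ∧ (γ t).2.2.2 = l) ∧ γ 0 = γ 1 ∧
      ∀ t : I, secondFactor (γ t) = 2⁻¹ * exp (2 * π * Complex.I * (t : ℝ)) := by
  let w : C(I, ℂ) := ⟨fun t ↦ 2⁻¹ * exp (2 * π * Complex.I * (t : ℝ)), by fun_prop⟩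
  have hw (t : I) : w t ≠ 0 ∧ w t ≠ 1 := by
    have : ‖w t‖ = 1 / 2 := by simp [w, norm_exp]
    constructor <;> intro h <;> norm_num [h] at this
  refine ⟨⟨fun t ↦ fiberPoint l (w t), ?_⟩, fun t ↦ ⟨fPoly_fiberPoint hl (hw t).1 (hw t).2, rfl⟩,
    by simp [w], fun t ↦ by simp [secondFactor_fiberPoint hl, w]⟩
  simp only [fiberPoint]
  fun_prop (disch := exact fun t ↦ mul_ne_zero (sub_ne_zero.mpr (hw t).2) (hw t).1)

/-- For `f(x,y,z,λ) = x(y² + λz − 1)(λy² + λ²z − λ + 1)` and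
`F(x,y,z,λ) = (f(x,y,z,λ), λ)`, the map `F` is not locally topologically trivial at
`(1,0) ∈ ℂ²`: there is no open neighborhood `D` of `(1,0)` and homeomorphism
`Φ : F⁻¹(D) ≃ F⁻¹(1,0) × D` commuting with the projection to `D`. -/
theorem stmt_19 (f : ℂ × ℂ × ℂ × ℂ → ℂ)
    (hf : ∀ x y z l : ℂ, f (x, y, z, l) =
      x * (y ^ 2 + l * z - 1) * (l * y ^ 2 + l ^ 2 * z - l + 1))
    (F : ℂ × ℂ × ℂ × ℂ → ℂ × ℂ)
    (hF : ∀ p : ℂ × ℂ × ℂ × ℂ, F p = (f p, p.2.2.2)) :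
    ¬ ∃ (D : Set (ℂ × ℂ)), IsOpen D ∧ ((1 : ℂ), (0 : ℂ)) ∈ D ∧
      ∃ Φ : (F ⁻¹' D) ≃ₜ (F ⁻¹' {((1 : ℂ), (0 : ℂ))}) × D,
        ∀ p : F ⁻¹' D, ((Φ p).2 : ℂ × ℂ) = F p := by
  obtain rfl : f = fPoly := funext fun ⟨x, y, z, l⟩ ↦ hf x y z l
  rintro ⟨D, hD, h10, Φ, hΦ⟩
  obtain ⟨l, hl, hlD⟩ := exists_ne_zero_forall_unitInterval_mem hD h10
  obtain ⟨γ, hγ, hγ_loop, hγ_winds⟩ := exists_loop_fPoly_eq_one_secondFactor_winds hl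
  let c : C(I, ℂ × ℂ) := ⟨fun s ↦ (1, (s : ℝ) * l), by fun_prop⟩
  obtain ⟨Γ, hΓ, hΓ1, hΓ_loop⟩ := exists_loopHomotopy_of_trivialization Φ hΦ c hlD γ
    (fun t ↦ by simp [c, hF, hγ]) hγ_loop
  have hΓf (s t : I) : fPoly (Γ (s, t)) = 1 := congrArg Prod.fst ((hF _).symm.trans (hΓ s t))
  have hΓl (s t : I) : (Γ (s, t)).2.2.2 = (s : ℝ) * l :=
    congrArg Prod.snd ((hF _).symm.trans (hΓ s t))
  refine one_ne_zero (Complex.int_eq_zero_of_loopHomotopy_const_exp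
    ⟨fun st ↦ secondFactor (Γ st), by simp only [secondFactor]; fun_prop⟩
    (fun st ↦ secondFactor_ne_zero_of_fPoly_eq_one (hΓf st.1 st.2))
    (fun s ↦ by simp [hΓ_loop]) 1 2⁻¹
    (fun t ↦ secondFactor_of_snd_snd_snd_eq_zero (by simp [hΓl])) 1
    (fun t ↦ by simp [hΓ1, hγ_winds]))
end
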